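/- arXiv:1005.3756 — 8 statements merged into one kernel-verified Lean document; each statement's English description precedes it below -/
import Mathlib

section
/- Let G be a finite simple group and C a non-trivial conjugacy class of G. Then C is not contained in the union of any two proper subgroups of G. -/
/-!
Enlarge `Y` to a maximal subgroup `B`. In a simple group no proper subgroup contains a whole
non-trivial conjugacy class, so some conjugate `a` of `g` lies outside `B`. Every `B`-conjugate
of `a` is then a conjugate of `g` outside `Y`, hence lies in `X`. The subgroup generated by the
`B`-conjugates of `a` is normalized by `B` and by `a ∉ B`, hence by all of `G`; being non-trivial,
it is `G`, so `X = G`.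
-/

namespace Subgroup

variable {G : Type*} [Group G]

theorem normalCore_eq_bot_of_ne_top [IsSimpleGroup G] {H : Subgroup G} (hH : H ≠ ⊤) :
    H.normalCore = ⊥ :=
  H.normalCore_normal.eq_bot_or_eq_top.resolve_right fun h =>
    hH (top_le_iff.mp (h ▸ H.normalCore_le))

theorem exists_conj_notMem_of_ne_top [IsSimpleGroup G] {g : G} (hg : g ≠ 1)
    {H : Subgroup G} (hH : H ≠ ⊤) : ∃ h : G, h * g * h⁻¹ ∉ H := by
  by_contra! hall
  have hcore : g ∈ H.normalCore := hall
  rw [normalCore_eq_bot_of_ne_top hH, mem_bot] at hcore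
  exact hg hcore

theorem conj_mem_iff {H : Subgroup G} {w : G} (hw : w ∈ H) {a : G} :
    w * a * w⁻¹ ∈ H ↔ a ∈ H := by
  rw [mul_mem_cancel_right (inv_mem hw), mul_mem_cancel_left hw]

theorem closure_conj_image_eq_top_of_isCoatom [IsSimpleGroup G] {B : Subgroup G}
    (hB : IsCoatom B) {a : G} (haB : a ∉ B) (ha : a ≠ 1) :
    closure ((fun w => w * a * w⁻¹) '' B) = ⊤ := by
  set D := closure ((fun w => w * a * w⁻¹) '' B)
  have haD : a ∈ D := subset_closure ⟨1, B.one_mem, by group⟩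
  have hBN : B ≤ normalizer (D : Set G) := by
    rw [le_normalizer_closure_iff]
    rintro w hw _ ⟨u, hu, rfl⟩
    exact subset_closure ⟨w * u, B.mul_mem hw hu, by group⟩
  have hN : normalizer (D : Set G) = ⊤ :=
    hB.2 _ (SetLike.lt_iff_le_and_exists.mpr ⟨hBN, a, le_normalizer haD, haB⟩)
  have : D.Normal := normalizer_eq_top_iff.mp hN
  exact this.eq_bot_or_eq_top.resolve_left fun hD => ha (by rwa [hD, mem_bot] at haD)

end Subgroup

open Subgroup in
/-- A non-trivial conjugacy class of a finite simple group is not contained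
in the union of two proper subgroups. -/
theorem stmt_0 (G : Type*) [Group G] [Finite G] [IsSimpleGroup G]
    (g : G) (hg : g ≠ 1) (X Y : Subgroup G) (hX : X ≠ ⊤) (hY : Y ≠ ⊤) :
    ¬ (∀ h : G, h * g * h⁻¹ ∈ X ∨ h * g * h⁻¹ ∈ Y) := by
  intro hcov
  obtain ⟨B, hB, hYB⟩ := (eq_top_or_exists_le_coatom Y).resolve_left hY
  obtain ⟨h₀, haB⟩ := exists_conj_notMem_of_ne_top hg hB.1
  set a := h₀ * g * h₀⁻¹
  have ha : a ≠ 1 := by simpa [a] using hg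
  have hconjX : ∀ w ∈ B, w * a * w⁻¹ ∈ X := by
    intro w hw
    have hconj : w * a * w⁻¹ = (w * h₀) * g * (w * h₀)⁻¹ := by simp only [a]; group
    refine hconj ▸ (hcov (w * h₀)).resolve_right fun hwY => haB ?_
    exact (conj_mem_iff hw).mp (hYB (hconj ▸ hwY))
  apply hX
  rw [eq_top_iff, ← closure_conj_image_eq_top_of_isCoatom hB haB ha, closure_le]
  rintro _ ⟨w, hw, rfl⟩
  exact hconjX w hw
end

section
/- Let G be a finite group generated by elements x, y, z with xyz = 1, and let k be a field and V a finite-dimensional kG-module such that V has no nonzero G-fixed vectors and the dual module V* has no nonzero G-fixed vectors. Then dim C_V(x) + dim C_V(y) + dim C_V(z) ≤ dim V, where C_V(g) denotes the fixed-point subspace of g on V. -/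
/-!
Put `a = ρ x`, `b = ρ y`, so that `ρ z = (a b)⁻¹` has the same fixed space as `a b`.
Since `x, y` generate `G`, a functional killing `(a - 1) V + (b - 1) V` is `G`-invariant, so
`(s, t) ↦ (a - 1) s + (b - 1) t` maps `V × V` onto `V` and its kernel has dimension `dim V`.
The map `(u, v, w) ↦ (u + b w, v + w)` sends `C_V(a) × C_V(b) × C_V(a b)` into that kernel, and it
is injective because `C_V(a) ∩ C_V(b) = V^G = 0`.
-/

open Module LinearMap

theorem Subgroup.closure_pair_eq_top_of_mul_mul_eq_one {G : Type*} [Group G] {x y z : G}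
    (hgen : closure {x, y, z} = ⊤) (hprod : x * y * z = 1) : closure {x, y} = ⊤ := by
  refine eq_top_iff.2 (hgen.ge.trans ((closure_le _).2 ?_))
  have hz : z = (x * y)⁻¹ := eq_inv_of_mul_eq_one_right hprod
  rintro g (rfl | rfl | rfl)
  · exact subset_closure (by simp)
  · exact subset_closure (by simp)
  · exact hz ▸ inv_mem (mul_mem (subset_closure (by simp)) (subset_closure (by simp)))

section LinearAlgebra

variable {k V : Type*} [Field k] [AddCommGroup V] [Module k V] [FiniteDimensional k V]

theorem finrank_ker_sub_one_add_finrank_ker_sub_one_add_finrank_ker_mul_sub_one_le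
    {a b : V →ₗ[k] V} (hrange : range (a - 1) ⊔ range (b - 1) = ⊤)
    (hdisj : Disjoint (ker (a - 1)) (ker (b - 1))) :
    finrank k (ker (a - 1)) + finrank k (ker (b - 1)) + finrank k (ker (a * b - 1)) ≤
      finrank k V := by
  set Ψ : V × V →ₗ[k] V := (a - 1).coprod (b - 1)
  have hΨ : finrank k (ker Ψ) = finrank k V := by
    have := Ψ.finrank_range_add_finrank_ker
    rw [range_coprod, hrange, finrank_top, finrank_prod] at this
    omega
  set L := ((ker (a - 1)).subtype.prodMap (ker (b - 1)).subtype).coprod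
    ((b.prod id).comp (ker (a * b - 1)).subtype)
  have hL : Function.Injective L := by
    refine (injective_iff_map_eq_zero L).2 ?_
    rintro ⟨⟨⟨u, hu⟩, ⟨v, hv⟩⟩, ⟨w, hw⟩⟩ h
    obtain ⟨h1, h2⟩ := Prod.ext_iff.1 h
    simp only [L, coprod_apply, prodMap_apply, comp_apply, prod_apply, Submodule.subtype_apply,
      Prod.fst_add, Prod.snd_add, Prod.fst_zero, Prod.snd_zero] at h1 h2
    obtain rfl : v = -w := eq_neg_of_add_eq_zero_left h2
    have hbw : b w = w := by simpa [sub_eq_zero] using hv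
    obtain rfl : u = -w := eq_neg_of_add_eq_zero_left (hbw ▸ h1)
    obtain rfl : w = 0 := (Submodule.disjoint_def.1 hdisj) w (by simpa using hu) (by simpa using hv)
    simp
  have hLΨ : range L ≤ ker Ψ := by
    rintro _ ⟨⟨⟨⟨u, hu⟩, ⟨v, hv⟩⟩, ⟨w, hw⟩⟩, rfl⟩
    simp only [mem_ker, LinearMap.sub_apply, Module.End.one_apply, Module.End.mul_apply] at hu hv hw
    simp only [L, Ψ, mem_ker, coprod_apply, prodMap_apply, Submodule.subtype_apply, comp_apply,
      LinearMap.prod_apply, Function.prod_apply, id_apply, Prod.mk_add_mk, LinearMap.sub_apply,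
      map_add, Module.End.one_apply]
    calc _ = (a u - u) + (b v - v) + (a (b w) - w) := by abel
      _ = 0 := by rw [hu, hv, hw, add_zero, add_zero]
  calc _ = finrank k (range L) := by rw [finrank_range_of_inj hL, finrank_prod, finrank_prod]
    _ ≤ finrank k V := hΨ ▸ Submodule.finrank_mono hLΨ

end LinearAlgebra

namespace Representation

variable {k G V : Type*} [Group G] [AddCommGroup V]

theorem ker_inv_sub_one [CommRing k] [Module k V] (ρ : Representation k G V) (g : G) :
    ker (ρ g⁻¹ - 1) = ker (ρ g - 1) := by
  suffices ∀ g : G, ker (ρ g⁻¹ - 1) ≤ ker (ρ g - 1) from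
    le_antisymm (this g) (by simpa using this g⁻¹)
  intro g v hv
  rw [mem_ker, LinearMap.sub_apply, Module.End.one_apply, sub_eq_zero] at hv ⊢
  calc ρ g v = ρ g (ρ g⁻¹ v) := by rw [hv]
    _ = v := self_inv_apply ρ g v

theorem iInf_ker_sub_one_eq_invariants [CommRing k] [Module k V] (ρ : Representation k G V)
    {S : Set G} (hS : Subgroup.closure S = ⊤) :
    ⨅ s ∈ S, ker (ρ s - 1) = ρ.invariants := by
  ext v
  simp only [Submodule.mem_iInf, mem_ker, LinearMap.sub_apply, Module.End.one_apply, sub_eq_zero,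
    mem_invariants]
  refine ⟨fun hv g => ?_, fun hv s _ => hv s⟩
  have hg : g ∈ Subgroup.closure S := hS ▸ Subgroup.mem_top g
  induction hg using Subgroup.closure_induction with
  | mem s hs => exact hv s hs
  | one => simp
  | mul g h _ _ hg hh => rw [map_mul, Module.End.mul_apply, hh, hg]
  | inv g _ hg =>
    calc ρ g⁻¹ v = ρ g⁻¹ (ρ g v) := by rw [hg]
      _ = v := inv_self_apply ρ g v

theorem dual_apply_eq_self_iff [CommRing k] [Module k V] (ρ : Representation k G V)
    (g : G) (φ : Dual k V) : ρ.dual g φ = φ ↔ ∀ v, φ (ρ g v) = φ v := by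
  rw [dual_apply, Dual.transpose_apply, LinearMap.ext_iff]
  refine ⟨fun h v => ?_, fun h v => ?_⟩
  · simpa using (h (ρ g v)).symm
  · simpa using (h (ρ g⁻¹ v)).symm

theorem iSup_range_sub_one_eq_top [Field k] [Module k V] (ρ : Representation k G V)
    {S : Set G} (hS : Subgroup.closure S = ⊤)
    (h : ∀ φ : Dual k V, (∀ g, ρ.dual g φ = φ) → φ = 0) :
    ⨆ s ∈ S, range (ρ s - 1) = ⊤ := by
  rw [← Submodule.dualAnnihilator_eq_bot_iff, eq_bot_iff]
  intro φ hφ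
  rw [Submodule.mem_bot]
  refine h φ ((mem_invariants _ φ).1 ?_)
  rw [← iInf_ker_sub_one_eq_invariants _ hS]
  simp only [Submodule.mem_iInf, mem_ker, LinearMap.sub_apply, Module.End.one_apply, sub_eq_zero]
  intro s hs
  rw [dual_apply_eq_self_iff]
  intro v
  have hv : ρ s v - v ∈ ⨆ s ∈ S, range (ρ s - 1) :=
    Submodule.mem_iSup_of_mem s (Submodule.mem_iSup_of_mem hs ⟨v, rfl⟩)
  rw [← sub_eq_zero, ← map_sub]
  exact (Submodule.mem_dualAnnihilator φ).1 hφ _ hv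

end Representation

theorem stmt_1_general (G : Type*) [Group G]
    (k : Type*) [Field k] (V : Type*) [AddCommGroup V] [Module k V]
    [FiniteDimensional k V] (ρ : Representation k G V)
    (x y z : G) (hgen : Subgroup.closure {x, y, z} = ⊤) (hprod : x * y * z = 1)
    (hV : ∀ v : V, (∀ g : G, ρ g v = v) → v = 0)
    (hV' : ∀ φ : Module.Dual k V, (∀ g : G, ρ.dual g φ = φ) → φ = 0) :
    Module.finrank k (LinearMap.ker (ρ x - 1)) +
      Module.finrank k (LinearMap.ker (ρ y - 1)) +
      Module.finrank k (LinearMap.ker (ρ z - 1)) ≤ Module.finrank k V := by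
  have hxy : Subgroup.closure {x, y} = ⊤ :=
    Subgroup.closure_pair_eq_top_of_mul_mul_eq_one hgen hprod
  rw [eq_inv_of_mul_eq_one_right hprod, ρ.ker_inv_sub_one, map_mul]
  refine finrank_ker_sub_one_add_finrank_ker_sub_one_add_finrank_ker_mul_sub_one_le ?_ ?_
  · simpa only [iSup_pair] using ρ.iSup_range_sub_one_eq_top hxy hV'
  · have hinv : ker (ρ x - 1) ⊓ ker (ρ y - 1) = ρ.invariants := by
      simpa only [iInf_pair] using ρ.iInf_ker_sub_one_eq_invariants hxy
    rw [disjoint_iff, hinv, eq_bot_iff]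
    exact fun v hv => (Submodule.mem_bot k).2 (hV v hv)

/-- Consequence of Scott's Lemma: if a finite group `G` is generated by
`x, y, z` with `x * y * z = 1`, and `V` is a finite dimensional `kG`-module
with no nonzero `G`-fixed vectors in `V` nor in its dual, then
`dim C_V(x) + dim C_V(y) + dim C_V(z) ≤ dim V`. -/
theorem stmt_1 (G : Type*) [Group G] [Finite G]
    (k : Type*) [Field k] (V : Type*) [AddCommGroup V] [Module k V]
    [FiniteDimensional k V] (ρ : Representation k G V)
    (x y z : G) (hgen : Subgroup.closure {x, y, z} = ⊤) (hprod : x * y * z = 1)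
    (hV : ∀ v : V, (∀ g : G, ρ g v = v) → v = 0)
    (hV' : ∀ φ : Module.Dual k V, (∀ g : G, ρ.dual g φ = φ) → φ = 0) :
    Module.finrank k (LinearMap.ker (ρ x - 1)) +
      Module.finrank k (LinearMap.ker (ρ y - 1)) +
      Module.finrank k (LinearMap.ker (ρ z - 1)) ≤ Module.finrank k V :=
  stmt_1_general G k V ρ x y z hgen hprod hV hV'
end

section
/- Let k be an algebraically closed field, n ≥ 2, and let x, y ∈ GL_n(k) be conjugate elements such that xy is conjugate to x². Let G = ⟨x, y⟩ and let V = kⁿ be the natural module. If V contains no 1-dimensional kG-submodule and has no 1-dimensional kG-quotient module, then every eigenspace of x on V has dimension at most n/3. -/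
/-!
Write `e_g(μ)` for the dimension of the `μ`-eigenspace of `g`, and `[V, g] = (g - 1) V`.
For `θ ≠ 0` put `P = θ⁻¹ x`, `Q = θ⁻¹ y`: the fixed spaces of `P`, `Q` and `PQ` are the
eigenspaces of `x`, `y` at `θ` and of `xy` at `θ²`. An invariant line would be spanned by a
common fixed vector of `P` and `Q`, and an invariant hyperplane would contain
`[V, P] + [V, Q]`; so `P`, `Q` have no common fixed vector and `[V, P] + [V, Q] = V`. Then
`[V, P] ∩ [V, Q]` has dimension `n - e_x(θ) - e_y(θ)`, and `Q - 1` embeds the fixed space of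
`PQ` into it (Scott's lemma), so `e_x(θ) + e_y(θ) + e_{xy}(θ²) ≤ n`. Conjugacy gives
`e_y(θ) = e_x(θ)` and `e_{xy}(θ²) = e_{x²}(θ²) ≥ e_x(θ)`.
-/

open LinearMap Module Module.End

section

variable {k V : Type*} [Field k] [AddCommGroup V] [Module k V]

theorem span_singleton_mem_invtSubmodule_of_apply_eq_self {f : End k V} {v : V} (hv : f v = v) :
    (k ∙ v) ∈ f.invtSubmodule := by
  rw [mem_invtSubmodule_iff_map_le, Submodule.map_span, Set.image_singleton, hv]

theorem mem_invtSubmodule_of_range_sub_one_le {f : End k V} {W : Submodule k V}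
    (h : range (f - 1) ≤ W) : W ∈ f.invtSubmodule := fun w hw ↦ by
  rw [Submodule.mem_comap, ← sub_add_cancel (f w) w]
  exact W.add_mem (h (mem_range_self (f - 1) w)) hw

theorem inf_ker_sub_one_eq_bot_of_forall_finrank_ne_one (P Q : End k V)
    (h : ∀ W ∈ P.invtSubmodule, W ∈ Q.invtSubmodule → finrank k W ≠ 1) :
    ker (P - 1) ⊓ ker (Q - 1) = ⊥ := by
  rw [eq_bot_iff]
  rintro v ⟨hPv, hQv⟩
  rw [Submodule.mem_bot]
  by_contra hv
  exact h _ (span_singleton_mem_invtSubmodule_of_apply_eq_self (sub_eq_zero.mp hPv))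
    (span_singleton_mem_invtSubmodule_of_apply_eq_self (sub_eq_zero.mp hQv))
    (finrank_span_singleton hv)

theorem sup_range_sub_one_eq_top_of_forall_finrank_quotient_ne_one (P Q : End k V)
    (h : ∀ W ∈ P.invtSubmodule, W ∈ Q.invtSubmodule → finrank k (V ⧸ W) ≠ 1) :
    range (P - 1) ⊔ range (Q - 1) = ⊤ := by
  by_contra hne
  obtain ⟨φ, hφ, hle⟩ := Submodule.exists_le_ker_of_lt_top _ (lt_top_iff_ne_top.mpr hne)
  refine h (ker φ) (mem_invtSubmodule_of_range_sub_one_le (le_sup_left.trans hle))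
    (mem_invtSubmodule_of_range_sub_one_le (le_sup_right.trans hle)) ?_
  rw [φ.quotKerEquivRange.finrank_eq, Dual.range_eq_top_of_ne_zero hφ, finrank_top, finrank_self]

theorem ker_inv_smul_sub_one_eq_eigenspace (f : End k V) {θ : k} (hθ : θ ≠ 0) :
    ker (θ⁻¹ • f - 1) = f.eigenspace θ := by
  ext v
  rw [mem_ker, mem_eigenspace_iff, LinearMap.sub_apply, LinearMap.smul_apply, one_apply,
    sub_eq_zero, inv_smul_eq_iff₀ hθ]

theorem eigenspace_le_eigenspace_pow (f : End k V) (μ : k) (m : ℕ) :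
    f.eigenspace μ ≤ (f ^ m).eigenspace (μ ^ m) := fun v hv ↦ by
  rw [mem_eigenspace_iff] at hv ⊢
  induction m with
  | zero => simp
  | succ m ih => rw [pow_succ, mul_apply, hv, map_smul, ih, smul_smul, pow_succ']

variable [FiniteDimensional k V]

theorem mem_invtSubmodule_of_mul_eq_one {f g : End k V} (hgf : g * f = 1)
    {W : Submodule k V} (hW : W ∈ f.invtSubmodule) : W ∈ g.invtSubmodule := by
  have hgf' (v : V) : g (f v) = v := by rw [← mul_apply, hgf, one_apply]
  have hmap : W.map f = W := Submodule.eq_of_le_of_finrank_eq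
    ((mem_invtSubmodule_iff_map_le f).mp hW)
    (Submodule.equivMapOfInjective f (Function.LeftInverse.injective hgf') W).finrank_eq.symm
  intro w hw
  rw [← hmap] at hw
  obtain ⟨u, hu, rfl⟩ := hw
  rwa [Submodule.mem_comap, hgf']

theorem Representation.mem_invtSubmodule_of_mem_closure {G : Type*} [Group G]
    (ρ : Representation k G V) {s : Set G} {W : Submodule k V}
    (hs : ∀ g ∈ s, W ∈ Module.End.invtSubmodule (ρ g)) {g : G}
    (hg : g ∈ Subgroup.closure s) :
    W ∈ Module.End.invtSubmodule (ρ g) := by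
  induction hg using Subgroup.closure_induction with
  | mem g hg => exact hs g hg
  | one => simp
  | mul g h _ _ hg hh => rw [map_mul]; exact invtSubmodule.comp _ hg hh
  | inv g _ hg =>
    exact mem_invtSubmodule_of_mul_eq_one (by rw [← map_mul, inv_mul_cancel, map_one]) hg

theorem finrank_eigenspace_le_of_semiconjBy {f g : End k V} (c : (End k V)ˣ)
    (hc : SemiconjBy (c : End k V) f g) (μ : k) :
    finrank k (f.eigenspace μ) ≤ finrank k (g.eigenspace μ) := by
  have hmap : (f.eigenspace μ).map (c : End k V) ≤ g.eigenspace μ := by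
    rintro _ ⟨v, hv, rfl⟩
    rw [SetLike.mem_coe, mem_eigenspace_iff] at hv
    rw [mem_eigenspace_iff, ← mul_apply, ← hc.eq, mul_apply, hv, map_smul]
  have hinj : Function.Injective (c : End k V) := ((isUnit_iff _).mp c.isUnit).injective
  exact (Submodule.equivMapOfInjective _ hinj _).finrank_eq.trans_le (Submodule.finrank_mono hmap)

theorem IsConj.finrank_eigenspace_eq {f g : End k V} (h : IsConj f g) (μ : k) :
    finrank k (f.eigenspace μ) = finrank k (g.eigenspace μ) := by
  have ⟨c, hc⟩ := h
  have ⟨d, hd⟩ := h.symm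
  exact le_antisymm (finrank_eigenspace_le_of_semiconjBy c hc μ)
    (finrank_eigenspace_le_of_semiconjBy d hd μ)

theorem scott_finrank_ker_sub_one_le (P Q : End k V)
    (hker : ker (P - 1) ⊓ ker (Q - 1) = ⊥) (hrange : range (P - 1) ⊔ range (Q - 1) = ⊤) :
    finrank k (ker (P - 1)) + finrank k (ker (Q - 1)) + finrank k (ker (P * Q - 1))
      ≤ finrank k V := by
  set K := ker (P * Q - 1)
  -- `(Q - 1) c = (P - 1) (-Q c)` whenever `P Q c = c`
  have hmap : K.map (Q - 1) ≤ range (P - 1) ⊓ range (Q - 1) := by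
    rintro _ ⟨c, hc, rfl⟩
    refine ⟨⟨-Q c, ?_⟩, mem_range_self _ c⟩
    have hc : P (Q c) = c := sub_eq_zero.mp hc
    simp only [LinearMap.sub_apply, one_apply, map_neg, hc]
    abel
  have hdisj : Disjoint K (ker (Q - 1)) := by
    rw [disjoint_iff, eq_bot_iff, ← hker]
    rintro c ⟨hPQc, hQc⟩
    have hQc : Q c = c := sub_eq_zero.mp hQc
    have hPc : P c = c := calc
      P c = P (Q c) := by rw [hQc]
      _ = c := sub_eq_zero.mp hPQc
    exact ⟨sub_eq_zero.mpr hPc, sub_eq_zero.mpr hQc⟩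
  have hK : finrank k K ≤ finrank k ↥(range (P - 1) ⊓ range (Q - 1)) := by
    rw [← finrank_range_of_inj (injective_domRestrict_iff.mpr hdisj)]
    exact Submodule.finrank_mono (by rwa [range_domRestrict])
  have hsum := Submodule.finrank_sup_add_finrank_inf_eq (range (P - 1)) (range (Q - 1))
  rw [hrange, finrank_top] at hsum
  have hP := (P - 1).finrank_range_add_finrank_ker
  have hQ := (Q - 1).finrank_range_add_finrank_ker
  omega

theorem finrank_eigenspace_add_add_eigenspace_mul_le (X Y : End k V) {θ : k} (hθ : θ ≠ 0)
    (hXY : ∀ W ∈ X.invtSubmodule, W ∈ Y.invtSubmodule →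
      finrank k W ≠ 1 ∧ finrank k (V ⧸ W) ≠ 1) :
    finrank k (X.eigenspace θ) + finrank k (Y.eigenspace θ) +
      finrank k ((X * Y).eigenspace (θ ^ 2)) ≤ finrank k V := by
  have hinvt (f : End k V) : (θ⁻¹ • f).invtSubmodule = f.invtSubmodule :=
    invtSubmodule_smul f (Units.mk0 θ⁻¹ (inv_ne_zero hθ))
  have hPQ : θ⁻¹ • X * θ⁻¹ • Y = (θ ^ 2)⁻¹ • (X * Y) := by
    rw [smul_mul_smul_comm, ← inv_pow, sq]
  have h := scott_finrank_ker_sub_one_le (θ⁻¹ • X) (θ⁻¹ • Y)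
    (inf_ker_sub_one_eq_bot_of_forall_finrank_ne_one _ _ fun W hX hY ↦
      (hXY W (hinvt X ▸ hX) (hinvt Y ▸ hY)).1)
    (sup_range_sub_one_eq_top_of_forall_finrank_quotient_ne_one _ _ fun W hX hY ↦
      (hXY W (hinvt X ▸ hX) (hinvt Y ▸ hY)).2)
  rwa [hPQ, ker_inv_smul_sub_one_eq_eigenspace X hθ, ker_inv_smul_sub_one_eq_eigenspace Y hθ,
    ker_inv_smul_sub_one_eq_eigenspace (X * Y) (pow_ne_zero 2 hθ)] at h

end

theorem stmt_2_general (k : Type*) [Field k] (n : ℕ)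
    (x y : Matrix.GeneralLinearGroup (Fin n) k)
    (hconj : IsConj x y) (hconj2 : IsConj (x * y) (x ^ 2))
    (hsub : ∀ W : Submodule k (Fin n → k),
      (∀ g ∈ Subgroup.closure ({x, y} : Set (Matrix.GeneralLinearGroup (Fin n) k)),
        ∀ v ∈ W, (g : Matrix (Fin n) (Fin n) k).mulVec v ∈ W) →
      Module.finrank k W ≠ 1 ∧ Module.finrank k ((Fin n → k) ⧸ W) ≠ 1) :
    ∀ θ : k,
      3 * Module.finrank k
        (Module.End.eigenspace ((x : Matrix (Fin n) (Fin n) k).mulVecLin) θ) ≤ n := by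
  intro θ
  let ρ : Representation k (GL (Fin n) k) (Fin n → k) :=
    (Units.coeHom _).comp Matrix.GeneralLinearGroup.toLin.toMonoidHom
  change 3 * finrank k (eigenspace (ρ x) θ) ≤ n
  rcases eq_or_ne θ 0 with rfl | hθ
  · rw [eigenspace_zero, ker_eq_bot.mpr ((isUnit_iff _).mp ((Group.isUnit x).map ρ)).injective,
      finrank_bot]
    omega
  have hX : finrank k (eigenspace (ρ x) θ) ≤ finrank k (eigenspace (ρ x ^ 2) (θ ^ 2)) :=
    Submodule.finrank_mono (eigenspace_le_eigenspace_pow _ θ 2)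
  have hY := (ρ.map_isConj hconj).finrank_eigenspace_eq θ
  have hXY := (by simpa only [map_mul, map_pow] using ρ.map_isConj hconj2 :
    IsConj (ρ x * ρ y) (ρ x ^ 2)).finrank_eigenspace_eq (θ ^ 2)
  have h := finrank_eigenspace_add_add_eigenspace_mul_le (ρ x) (ρ y) hθ fun W hWx hWy ↦
    hsub W fun g hg ↦
      ρ.mem_invtSubmodule_of_mem_closure (by simpa [forall_and] using ⟨hWx, hWy⟩) hg
  rw [finrank_fin_fun] at h
  omega

/-- If `x, y ∈ GL_n(k)` (`k` algebraically closed, `n ≥ 2`) are conjugate with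
`x * y` conjugate to `x ^ 2`, `G = ⟨x, y⟩`, and the natural module `kⁿ` has no
`1`-dimensional `kG`-submodule and no `1`-dimensional `kG`-quotient, then every
eigenspace of `x` has dimension at most `n/3`. -/
theorem stmt_2 (k : Type*) [Field k] [IsAlgClosed k] (n : ℕ) (hn : 2 ≤ n)
    (x y : Matrix.GeneralLinearGroup (Fin n) k)
    (hconj : IsConj x y) (hconj2 : IsConj (x * y) (x ^ 2))
    (hsub : ∀ W : Submodule k (Fin n → k),
      (∀ g ∈ Subgroup.closure ({x, y} : Set (Matrix.GeneralLinearGroup (Fin n) k)),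
        ∀ v ∈ W, (g : Matrix (Fin n) (Fin n) k).mulVec v ∈ W) →
      Module.finrank k W ≠ 1 ∧ Module.finrank k ((Fin n → k) ⧸ W) ≠ 1) :
    ∀ θ : k,
      3 * Module.finrank k
        (Module.End.eigenspace ((x : Matrix (Fin n) (Fin n) k).mulVecLin) θ) ≤ n :=
  stmt_2_general k n x y hconj hconj2 hsub
end

section
/- Let q be a prime power and let F_q be the field with q elements. For every t ∈ F_q and every conjugacy class C of elements of order q−1 in SL_2(q) with q > 11 odd (equivalently, C is the class of a regular split semisimple element), there exist x, y ∈ C with trace(xy) = t. -/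
/-!
Since `g ^ q = g`, the minimal polynomial of `g` divides `X ^ q - X`, so the characteristic
polynomial `X² - tr(g) X + 1` has a root `a ∈ F`; let `b = a⁻¹` be the other one. If `a = b`, then
`(g - a)² = 0`, and expanding `g ^ (q - 1) = (a + (g - a)) ^ (q - 1) = 1 - a ^ (q - 2) (g - a)`
forces `g = a`, an element of order at most `2`. So `a ≠ b`, and `g` and `d = diag(a, b)` are
non-scalar, hence (through a cyclic vector) both conjugate in `GL₂(F)` to the same companion
matrix. As `SL₂(F)` is normal in `GL₂(F)`, the values of `tr(g · hgh⁻¹)` for `h ∈ SL₂(F)`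
are those of `tr(d · VdV⁻¹)` for `V ∈ SL₂(F)`, and `V = [[s, s - 1], [1, 1]]` gives
`2 + s (a - b)²`, which takes every value.
-/

open Matrix Polynomial

namespace Matrix

variable {n R K : Type*} [Fintype n] [DecidableEq n] [CommRing R] [Field K]

theorem sub_scalar_sq_eq_zero_fin_two [Nontrivial R] {A : Matrix (Fin 2) (Fin 2) R} {a : R}
    (htr : A.trace = 2 * a) (hdet : A.det = a ^ 2) : (A - scalar (Fin 2) a) ^ 2 = 0 := by
  have hchar : A.charpoly = (X - C a) ^ 2 := by
    rw [charpoly_fin_two, htr, hdet]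
    simp only [map_mul, map_pow, map_ofNat]
    ring
  have h := A.aeval_self_charpoly
  simp only [hchar, map_pow, map_sub, aeval_X, aeval_C] at h
  exact h

def cyclicMatrix (A : Matrix (Fin 2) (Fin 2) R) (v : Fin 2 → R) : Matrix (Fin 2) (Fin 2) R :=
  !![v 0, (A *ᵥ v) 0; v 1, (A *ᵥ v) 1]

theorem mul_cyclicMatrix (A : Matrix (Fin 2) (Fin 2) R) (v : Fin 2 → R) :
    A * cyclicMatrix A v = cyclicMatrix A v * !![0, -A.det; 1, A.trace] := by
  ext i j
  fin_cases i <;> fin_cases j <;>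
    simp [cyclicMatrix, mul_apply, mulVec, dotProduct, Fin.sum_univ_two, det_fin_two,
      trace_fin_two] <;> ring

theorem exists_det_cyclicMatrix_ne_zero {A : Matrix (Fin 2) (Fin 2) K}
    (hA : ∀ c : K, A ≠ scalar (Fin 2) c) : ∃ v : Fin 2 → K, (cyclicMatrix A v).det ≠ 0 := by
  by_cases h10 : A 1 0 = 0
  · by_cases h01 : A 0 1 = 0
    · refine ⟨![1, 1], ?_⟩
      have h : A 0 0 ≠ A 1 1 := fun h => hA (A 0 0) <| by
        ext i j; fin_cases i <;> fin_cases j <;> simp [h10, h01, h]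
      simpa [cyclicMatrix, det_fin_two, mulVec, dotProduct, h10, h01, sub_eq_zero] using h.symm
    · exact ⟨![0, 1], by simpa [cyclicMatrix, det_fin_two, mulVec, dotProduct] using h01⟩
  · exact ⟨![1, 0], by simpa [cyclicMatrix, det_fin_two, mulVec, dotProduct] using h10⟩

theorem isConj_companion_fin_two {A : Matrix (Fin 2) (Fin 2) K}
    (hA : ∀ c : K, A ≠ scalar (Fin 2) c) : IsConj !![0, -A.det; 1, A.trace] A := by
  obtain ⟨v, hv⟩ := exists_det_cyclicMatrix_ne_zero hA
  exact ⟨GeneralLinearGroup.mkOfDetNeZero _ hv, (mul_cyclicMatrix A v).symm⟩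

theorem isConj_diagonal_fin_two {A : Matrix (Fin 2) (Fin 2) K} {a b : K} (hab : a ≠ b)
    (htr : A.trace = a + b) (hdet : A.det = a * b) : IsConj A (diagonal ![a, b]) := by
  have hA : ∀ c : K, A ≠ scalar (Fin 2) c := by
    rintro c rfl
    have h1 : 2 * c = a + b := by simpa using htr
    have h2 : c ^ 2 = a * b := by simpa using hdet
    exact hab <| sub_eq_zero.1 <| pow_eq_zero_iff two_ne_zero |>.1 <| by
      linear_combination (-(2 * c + a + b)) * h1 + 4 * h2
  have hD : ∀ c : K, diagonal ![a, b] ≠ scalar (Fin 2) c := fun c h => hab <| by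
    have h0 := congr_fun₂ h 0 0
    have h1 := congr_fun₂ h 1 1
    simp_all
  have hDc := isConj_companion_fin_two hD
  simp only [det_diagonal, trace_diagonal, Fin.prod_univ_two, Fin.sum_univ_two,
    Matrix.cons_val_zero, Matrix.cons_val_one] at hDc
  rw [← htr, ← hdet] at hDc
  exact (isConj_companion_fin_two hA).symm.trans hDc

theorem exists_isRoot_charpoly_of_pow_card_eq_self [Fintype K] [Nonempty n] (A : Matrix n n K)
    (hA : A ^ Fintype.card K = A) : ∃ a : K, A.charpoly.IsRoot a := by
  have hsplit : (X ^ Fintype.card K - X : K[X]).Splits := by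
    simpa [Nat.card_eq_fintype_card] using splits_X_pow_nat_card_sub_X (K := K)
  have hdvd : minpoly K A ∣ X ^ Fintype.card K - X := minpoly.dvd K A (by simp [hA])
  obtain ⟨a, ha⟩ := (hsplit.of_dvd (FiniteField.X_pow_card_sub_X_ne_zero K Fintype.one_lt_card)
    hdvd).exists_eval_eq_zero (minpoly.degree_pos (.of_finite K A)).ne'
  exact ⟨a, IsRoot.dvd ha A.minpoly_dvd_charpoly⟩

theorem _root_.Commute.add_pow_succ_of_sq_eq_zero {M : Type*} [Semiring M] {x y : M}
    (hxy : Commute x y) (hy : y ^ 2 = 0) (k : ℕ) :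
    (x + y) ^ (k + 1) = x ^ (k + 1) + (k + 1) • (x ^ k * y) := by
  induction k with
  | zero => simp
  | succ k ih =>
    have hyxy : x ^ k * y * y = 0 := by rw [mul_assoc, ← sq, hy, mul_zero]
    rw [pow_succ, ih, add_mul, mul_add, mul_add, smul_mul_assoc, smul_mul_assoc, hyxy,
      mul_assoc (x ^ k) y x, ← hxy.eq, ← mul_assoc, ← pow_succ, ← pow_succ, smul_zero, add_zero,
      succ_nsmul _ (k + 1)]
    abel

theorem eq_scalar_of_sub_scalar_sq_eq_zero [Fintype K] {A : Matrix n n K} {a : K} (ha : a ≠ 0)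
    (hsq : (A - scalar n a) ^ 2 = 0) (hA : A ^ (Fintype.card K - 1) = 1) : A = scalar n a := by
  obtain ⟨k, hk⟩ : ∃ k, Fintype.card K - 1 = k + 1 :=
    ⟨Fintype.card K - 2, by have := Fintype.one_lt_card (α := K); omega⟩
  have hk' : (k + 1 : K) = -1 := by
    have := congrArg (Nat.cast (R := K)) hk
    rw [Nat.cast_sub Fintype.card_pos, FiniteField.cast_card_eq_zero] at this
    push_cast at this
    linear_combination -this
  have hak : a ^ (k + 1) = 1 := hk ▸ FiniteField.pow_card_sub_one_eq_one a ha
  have hA' : A ^ (k + 1) = 1 := hk ▸ hA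
  have hpow := ((scalar_commute a (fun _ => .all _ _) (A - scalar n a)).add_pow_succ_of_sq_eq_zero
    hsq k)
  rw [add_sub_cancel, hA', ← map_pow, hak, map_one, left_eq_add, ← Nat.cast_smul_eq_nsmul K,
    Nat.cast_succ, hk', neg_one_smul, neg_eq_zero, ← map_pow, scalar_apply,
    ← smul_eq_diagonal_mul, smul_eq_zero] at hpow
  exact sub_eq_zero.1 (hpow.resolve_left (pow_ne_zero k ha))

namespace SpecialLinearGroup

def unitsConj (c : (Matrix n n R)ˣ) : SpecialLinearGroup n R →* SpecialLinearGroup n R where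
  toFun V := ⟨c * V * c⁻¹, by
    rw [det_mul, det_mul, mul_right_comm, ← det_mul, Units.mul_inv, det_one, one_mul, V.2]⟩
  map_one' := Subtype.ext <| by simp
  map_mul' V W := Subtype.ext <| by
    change (c : Matrix n n R) * ((V * W : SpecialLinearGroup n R) : Matrix n n R) *
      (↑c⁻¹ : Matrix n n R) = (c * V * (↑c⁻¹ : Matrix n n R)) * (c * W * (↑c⁻¹ : Matrix n n R))
    simp [mul_assoc]

theorem trace_unitsConj (c : (Matrix n n R)ˣ) (V : SpecialLinearGroup n R) :
    trace (unitsConj c V : Matrix n n R) = trace (V : Matrix n n R) :=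
  trace_units_conj c V

theorem exists_trace_mul_conj_eq_of_isConj {g d : SpecialLinearGroup n R}
    (hgd : IsConj (g : Matrix n n R) d) (V : SpecialLinearGroup n R) :
    ∃ h : SpecialLinearGroup n R, trace (↑(g * (h * g * h⁻¹)) : Matrix n n R) =
      trace (↑(d * (V * d * V⁻¹)) : Matrix n n R) := by
  obtain ⟨c, hc⟩ := hgd
  have hg : g = unitsConj c⁻¹ d := Subtype.ext <| by
    change _ = (↑c⁻¹ : Matrix n n R) * d * ((c⁻¹⁻¹ : (Matrix n n R)ˣ) : Matrix n n R)
    rw [inv_inv, mul_assoc]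
    exact (Units.eq_inv_mul_iff_mul_eq c).2 hc
  refine ⟨unitsConj c⁻¹ V, ?_⟩
  rw [hg, ← map_inv, ← map_mul, ← map_mul, ← map_mul, trace_unitsConj]

theorem trace_mul_conj_fin_two {d V : SpecialLinearGroup (Fin 2) R} {a b s : R}
    (hd : (d : Matrix (Fin 2) (Fin 2) R) = diagonal ![a, b])
    (hV : (V : Matrix (Fin 2) (Fin 2) R) = !![s, s - 1; 1, 1]) :
    trace (↑(d * (V * d * V⁻¹)) : Matrix (Fin 2) (Fin 2) R) = 2 * (a * b) + s * (a - b) ^ 2 := by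
  simp only [coe_mul, coe_inv, hd, hV, diagonal_fin_two, adjugate_fin_two_of, mul_fin_two,
    trace_fin_two_of, cons_val_zero, cons_val_one, cons_val_fin_one]
  ring

theorem exists_isConj_diagonal_of_orderOf_eq [Fintype K] {g : SpecialLinearGroup (Fin 2) K}
    (hg : orderOf g = Fintype.card K - 1) (hq : 3 < Fintype.card K) :
    ∃ a b : K, a ≠ b ∧ a * b = 1 ∧ IsConj (g : Matrix (Fin 2) (Fin 2) K) (diagonal ![a, b]) := by
  have hA : (g : Matrix (Fin 2) (Fin 2) K) ^ (Fintype.card K - 1) = 1 := by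
    rw [← coe_pow, ← hg, pow_orderOf_eq_one, coe_one]
  have hdet : (g : Matrix (Fin 2) (Fin 2) K).det = 1 := g.2
  obtain ⟨a, ha⟩ := exists_isRoot_charpoly_of_pow_card_eq_self (g : Matrix (Fin 2) (Fin 2) K) <| by
    rw [← Nat.sub_add_cancel Fintype.card_pos, pow_succ, hA, one_mul]
  obtain ⟨b, hb⟩ : ∃ b, b = (g : Matrix (Fin 2) (Fin 2) K).trace - a := ⟨_, rfl⟩
  have hab : a * b = 1 := by
    simp only [IsRoot, charpoly_fin_two, hdet, eval_add, eval_sub, eval_mul, eval_pow, eval_X,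
      eval_C] at ha
    linear_combination -ha + a * hb
  have hne : a ≠ b := by
    intro h
    have hscalar := eq_scalar_of_sub_scalar_sq_eq_zero (left_ne_zero_of_mul_eq_one hab)
      (sub_scalar_sq_eq_zero_fin_two (by linear_combination -hb - h)
        (by linear_combination hdet - hab - a * h)) hA
    have hg2 : g ^ 2 = 1 := Subtype.ext <| by
      rw [coe_pow, coe_one, hscalar, ← map_pow, ← map_one (scalar (Fin 2))]
      congr 1
      linear_combination hab + a * h
    have := orderOf_le_of_pow_eq_one two_pos hg2
    omega
  exact ⟨a, b, hne, hab, isConj_diagonal_fin_two hne (by linear_combination -hb) (by rw [hdet, hab])⟩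

end SpecialLinearGroup

end Matrix

theorem stmt_6_general (F : Type*) [Field F] [Fintype F]
    (hq : 11 < Fintype.card F)
    (g : Matrix.SpecialLinearGroup (Fin 2) F)
    (hg : orderOf g = Fintype.card F - 1) (t : F) :
    ∃ x y : Matrix.SpecialLinearGroup (Fin 2) F, IsConj g x ∧ IsConj g y ∧
      Matrix.trace ((x * y : Matrix.SpecialLinearGroup (Fin 2) F) :
        Matrix (Fin 2) (Fin 2) F) = t := by
  obtain ⟨a, b, hne, hab, hconj⟩ := SpecialLinearGroup.exists_isConj_diagonal_of_orderOf_eq hg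
    (by omega)
  obtain ⟨d, hd⟩ : ∃ d : SpecialLinearGroup (Fin 2) F, ↑d = diagonal ![a, b] :=
    ⟨⟨diagonal ![a, b], by simp [Fin.prod_univ_two, hab]⟩, rfl⟩
  obtain ⟨s, hs⟩ : ∃ s, s * (a - b) ^ 2 = t - 2 :=
    ⟨(t - 2) / (a - b) ^ 2, div_mul_cancel₀ _ (pow_ne_zero 2 (sub_ne_zero.2 hne))⟩
  obtain ⟨V, hV⟩ : ∃ V : SpecialLinearGroup (Fin 2) F, ↑V = !![s, s - 1; 1, 1] :=
    ⟨⟨_, by simp [det_fin_two_of]⟩, rfl⟩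
  obtain ⟨h, hh⟩ := SpecialLinearGroup.exists_trace_mul_conj_eq_of_isConj (hd ▸ hconj) V
  refine ⟨g, h * g * h⁻¹, .refl g, isConj_iff.2 ⟨h, rfl⟩, ?_⟩
  rw [hh, SpecialLinearGroup.trace_mul_conj_fin_two hd hV, hab, hs]
  ring

/-- For `q > 11` odd (`F` the field with `q` elements) and `C` the conjugacy
class of an element of order `q - 1` in `SL₂(q)`, the trace of a product of two
elements of `C` takes every value `t ∈ F`. -/
theorem stmt_6 (F : Type*) [Field F] [Fintype F]
    (hq : 11 < Fintype.card F) (hodd : Odd (Fintype.card F))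
    (g : Matrix.SpecialLinearGroup (Fin 2) F)
    (hg : orderOf g = Fintype.card F - 1) (t : F) :
    ∃ x y : Matrix.SpecialLinearGroup (Fin 2) F, IsConj g x ∧ IsConj g y ∧
      Matrix.trace ((x * y : Matrix.SpecialLinearGroup (Fin 2) F) :
        Matrix (Fin 2) (Fin 2) F) = t :=
  stmt_6_general F hq g hg t
end

section
/- Let k be an algebraically closed field, V a finite-dimensional k-vector space with dim V ≥ 2, and G a finite subgroup of GL(V) acting irreducibly. Suppose N is a normal elementary abelian 2-subgroup of G which does not act homogeneously (i.e., V has m > 1 distinct N-homogeneous components V₁,…,V_m), and g ∈ G acts on the set of homogeneous components with no fixed points. Then the average of dim C_V(gy) over y ∈ N is at most (1/3) dim V; in particular some element h ∈ gN satisfies dim C_V(h) ≤ (1/3) dim V. -/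
/-!
The components `W i` are simultaneous eigenspaces of `N` for distinct characters, hence
independent, so `V = ⨁ i, W i`. Conjugation by `g` permutes the characters, so `g` and every
`h = g y` (`y ∈ N`) permute the components along a fixed-point-free permutation `σ`. A vector
fixed by `h` is determined by its components at one index `r` of each cycle of `σ`, and that
component is fixed by `h ^ c`, `c` the length of the cycle; so `dim C_V(h)` is at most the sum
over the cycles of `dim C_{W r}(h ^ c)`. For `c ≥ 3` this term is at most `c * dim W r / 3`.
For `c = 2`, `(g y)²` acts on `W r` as `ε y • g²` with `ε = χ r * χ (σ r)`, a character of `N`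
that is nontrivial because `χ r ≠ χ (σ r)` and `y² = 1`. If `ε y₀ ≠ 1`, the fixed spaces of
`(g y)²` and `(g y₀ y)²` on `W r` are disjoint, so on average over `y` the fixed space of
`(g y)²` on `W r` has dimension at most `dim W r / 2`.
-/

open Module Finset

section CharEigenspace

variable {k V N : Type*} [Field k] [AddCommGroup V] [Module k V] [Monoid N]

def charEigenspace (ρ : N →* End k V) (ψ : N →* kˣ) : Submodule k V :=
  ⨅ y, End.eigenspace (ρ y) (ψ y)

theorem mem_charEigenspace {ρ : N →* End k V} {ψ : N →* kˣ} {v : V} :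
    v ∈ charEigenspace ρ ψ ↔ ∀ y, ρ y v = (ψ y : k) • v := by
  simp [charEigenspace]

/-- Applying a linear form to a relation `∑ v ψ = 0` and to its images under `ρ y` gives a
linear relation between the characters, which are linearly independent (Dedekind). -/
theorem iSupIndep_charEigenspace (ρ : N →* End k V) : iSupIndep (charEigenspace ρ) := by
  rw [iSupIndep_iff_finsetSum_eq_zero_imp_eq_zero]
  intro s v hv hsum ψ hψ
  have hchar : LinearIndependent k fun ψ : N →* kˣ => ((Units.coeHom k).comp ψ : N → k) :=
    (linearIndependent_monoidHom N k).comp _ fun φ ψ h => by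
      ext y
      exact congrFun (congrArg DFunLike.coe h) y
  rw [← Module.forall_dual_apply_eq_zero_iff k]
  intro f
  refine linearIndependent_iff'.1 hchar s (fun ψ => f (v ψ)) ?_ ψ hψ
  funext y
  have hsum_y := congrArg (fun x => f (ρ y x)) hsum
  simp only [map_sum, map_zero] at hsum_y
  simp only [Finset.sum_apply, Pi.smul_apply, smul_eq_mul, Pi.zero_apply]
  rw [← hsum_y]
  refine sum_congr rfl fun φ hφ => ?_
  rw [mem_charEigenspace.1 (hv φ hφ) y, map_smul, smul_eq_mul, mul_comm]
  rfl

theorem charEigenspace_eq_bot {ι : Type*} (ρ : N →* End k V) {χ : ι → N →* kˣ}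
    (hsup : ⨆ i, charEigenspace ρ (χ i) = ⊤) {ψ : N →* kˣ} (hψ : ψ ∉ Set.range χ) :
    charEigenspace ρ ψ = ⊥ := by
  have hle : ⨆ i, charEigenspace ρ (χ i) ≤ ⨆ (φ) (_ : φ ≠ ψ), charEigenspace ρ φ :=
    iSup_le fun i => le_iSup₂_of_le (χ i) (fun h => hψ ⟨i, h⟩) le_rfl
  rw [hsup, top_le_iff] at hle
  simpa [hle] using iSupIndep_charEigenspace ρ ψ

end CharEigenspace

section NormalSubgroup

variable {k V G : Type*} [Field k] [AddCommGroup V] [Module k V] [Group G]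
  (ρ : Representation k G V) (N : Subgroup G) [N.Normal]

theorem map_charEigenspace (ψ : N →* kˣ) (g : G) :
    (charEigenspace (ρ.comp N.subtype) ψ).map (ρ g) =
      charEigenspace (ρ.comp N.subtype) (ψ.comp (MulAut.conjNormal g⁻¹).toMonoidHom) := by
  ext v
  simp only [Submodule.mem_map, mem_charEigenspace, MonoidHom.coe_comp, Function.comp_apply,
    Subgroup.coe_subtype, MulEquiv.coe_toMonoidHom]
  constructor
  · rintro ⟨w, hw, rfl⟩ y
    have hw_y := hw (MulAut.conjNormal g⁻¹ y)
    rw [MulAut.conjNormal_apply, inv_inv] at hw_y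
    rw [← Module.End.mul_apply, ← map_mul, show (y : G) * g = g * (g⁻¹ * y * g) by group,
      map_mul, Module.End.mul_apply, hw_y, map_smul]
  · intro hv
    refine ⟨ρ g⁻¹ v, fun y => ?_, ρ.self_inv_apply g v⟩
    have hy : MulAut.conjNormal g⁻¹ (MulAut.conjNormal g y) = y := by
      ext
      simp
    have hv_y := hv (MulAut.conjNormal g y)
    rw [hy, MulAut.conjNormal_apply] at hv_y
    rw [← Module.End.mul_apply, ← map_mul, show (y : G) * g⁻¹ = g⁻¹ * (g * y * g⁻¹) by group,
      map_mul, Module.End.mul_apply, hv_y, map_smul]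

theorem exists_perm_map_charEigenspace_eq {ι : Type*} [Finite ι] {χ : ι → N →* kˣ}
    (hχ : Function.Injective χ) (hsup : ⨆ i, charEigenspace (ρ.comp N.subtype) (χ i) = ⊤)
    (hne : ∀ i, charEigenspace (ρ.comp N.subtype) (χ i) ≠ ⊥) (g : G) :
    ∃ σ : Equiv.Perm ι, ∀ i, (charEigenspace (ρ.comp N.subtype) (χ i)).map (ρ g) =
      charEigenspace (ρ.comp N.subtype) (χ (σ i)) := by
  have hrange : ∀ i, ∃ j, χ j = (χ i).comp (MulAut.conjNormal g⁻¹).toMonoidHom := by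
    intro i
    by_contra! h
    refine hne i (Submodule.map_injective_of_injective (ρ.apply_bijective g).injective ?_)
    rw [map_charEigenspace, Submodule.map_bot]
    exact charEigenspace_eq_bot _ hsup fun ⟨j, hj⟩ => h j hj
  choose σ hσ using hrange
  have hσinj : Function.Injective σ := fun a b hab =>
    hχ <| (MonoidHom.cancel_right (MulAut.conjNormal g⁻¹).surjective).1 <|
      (hσ a).symm.trans <| (congrArg χ hab).trans (hσ b)
  refine ⟨Equiv.ofBijective σ hσinj.bijective_of_finite, fun i => ?_⟩
  rw [Equiv.ofBijective_apply, hσ, map_charEigenspace]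

end NormalSubgroup

section Cycles

open Equiv

variable {ι : Type*} [DecidableEq ι] [Fintype ι]

-- instance search does not see `SameCycle` through the relation of `SameCycle.setoid`
instance Equiv.Perm.fintypeQuotientSameCycle (σ : Perm ι) :
    Fintype (Quotient (Perm.SameCycle.setoid σ)) :=
  @Quotient.fintype _ _ _ (Perm.instDecidableRelSameCycle σ)

theorem sum_eq_sum_quotient_sameCycle {M : Type*} [AddCommMonoid M] {σ : Perm ι}
    (hσ : ∀ i, σ i ≠ i) {F : ι → M} (hF : ∀ i, F (σ i) = F i) :
    ∑ i, F i = ∑ ω : Quotient (Perm.SameCycle.setoid σ), #(σ.cycleOf ω.out).support • F ω.out := by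
  classical
  have hpow : ∀ (n : ℕ) i, F ((σ ^ n) i) = F i := fun n i => by
    induction n with
    | zero => rfl
    | succ n ih => rw [pow_succ', Perm.mul_apply, hF, ih]
  rw [← sum_fiberwise univ (fun i => (⟦i⟧ : Quotient (Perm.SameCycle.setoid σ))) F]
  refine sum_congr rfl fun ω _ => ?_
  have hfiber : ({i | (⟦i⟧ : Quotient (Perm.SameCycle.setoid σ)) = ω} : Finset ι) =
      (σ.cycleOf ω.out).support := by
    ext i
    rw [mem_filter, Perm.mem_support_cycleOf_iff' (hσ _), ← Quotient.out_eq ω, Quotient.eq,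
      Quotient.out_eq]
    exact ⟨fun h => h.2.symm, fun h => ⟨mem_univ _, h.symm⟩⟩
  rw [hfiber, ← sum_const]
  refine sum_congr rfl fun i hi => ?_
  obtain ⟨n, rfl⟩ := ((Perm.mem_support_cycleOf_iff' (hσ _)).1 hi).exists_nat_pow_eq
  exact hpow n _

end Cycles

section Decomposition

open DirectSum Equiv

variable {k V ι : Type*} [Field k] [AddCommGroup V] [Module k V] [DecidableEq ι]
  (W : ι → Submodule k V) [Decomposition W] {σ : Perm ι} {T : V →ₗ[k] V}

theorem coe_decompose_apply_perm (hT : ∀ i, Set.MapsTo T (W i) (W (σ i))) (v : V) (i : ι) :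
    (decompose W (T v) (σ i) : V) = T (decompose W v i) := by
  induction v using Decomposition.inductionOn W with
  | zero => simp
  | @homogeneous j w =>
    obtain ⟨w, hw⟩ := w
    obtain rfl | h := eq_or_ne j i
    · rw [decompose_of_mem_same W hw, decompose_of_mem_same W (hT _ hw)]
    · rw [decompose_of_mem_ne W hw h, decompose_of_mem_ne W (hT _ hw) (σ.injective.ne h),
        map_zero]
  | add v v' hv hv' => simp [decompose_add, hv, hv']

theorem coe_decompose_pow_perm_of_apply_eq (hT : ∀ i, Set.MapsTo T (W i) (W (σ i))) {v : V}
    (hv : T v = v) (i : ι) (n : ℕ) :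
    (decompose W v ((σ ^ n) i) : V) = (T ^ n) (decompose W v i) := by
  induction n with
  | zero => rfl
  | succ n ih =>
    rw [pow_succ', Perm.mul_apply, ← hv, coe_decompose_apply_perm W hT, hv, ih, pow_succ',
      Module.End.mul_apply]

theorem finrank_ker_sub_one_le_sum_sameCycle [Fintype ι] [FiniteDimensional k V]
    (hT : ∀ i, Set.MapsTo T (W i) (W (σ i))) :
    finrank k (LinearMap.ker (T - 1)) ≤
      ∑ ω : Quotient (Perm.SameCycle.setoid σ),
        finrank k ↥(W ω.out ⊓ LinearMap.ker (T ^ #(σ.cycleOf ω.out).support - 1)) := by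
  set E : Quotient (Perm.SameCycle.setoid σ) → Submodule k V :=
    fun ω => W ω.out ⊓ LinearMap.ker (T ^ #(σ.cycleOf ω.out).support - 1)
  have hfix : ∀ v ∈ LinearMap.ker (T - 1), T v = v := fun v hv => by
    simpa [sub_eq_zero] using hv
  have hmem : ∀ v ∈ LinearMap.ker (T - 1), ∀ ω, (decompose W v ω.out : V) ∈ E ω := by
    intro v hv ω
    refine ⟨(decompose W v ω.out).2, ?_⟩
    have hcycle := coe_decompose_pow_perm_of_apply_eq W hT (hfix v hv) ω.out
      #(σ.cycleOf ω.out).support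
    rw [← σ.pow_mod_card_support_cycleOf_self_apply, Nat.mod_self, pow_zero,
      Perm.one_apply] at hcycle
    simp [← hcycle]
  let proj (i : ι) : V →ₗ[k] V :=
    (W i).subtype ∘ₗ component k ι (fun i => W i) i ∘ₗ (decomposeLinearEquiv W).toLinearMap
  let Ψ : LinearMap.ker (T - 1) →ₗ[k] ∀ ω, E ω := LinearMap.pi fun ω =>
    (proj ω.out ∘ₗ (LinearMap.ker (T - 1)).subtype).codRestrict (E ω) fun v => hmem v v.2 ω
  have hΨ : Function.Injective Ψ := by
    rw [← LinearMap.ker_eq_bot, LinearMap.ker_eq_bot']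
    intro v hv
    have hout : ∀ ω : Quotient (Perm.SameCycle.setoid σ), (decompose W (v : V) ω.out : V) = 0 :=
      fun ω => congrArg Subtype.val (congrFun hv ω)
    have hall : ∀ i, (decompose W (v : V) i : V) = 0 := fun i => by
      obtain ⟨n, hn⟩ := (Quotient.mk_out (s := Perm.SameCycle.setoid σ) i).exists_nat_pow_eq
      rw [← hn, coe_decompose_pow_perm_of_apply_eq W hT (hfix v v.2), hout, map_zero]
    refine Subtype.ext <| (decompose W).injective ?_
    ext i
    simpa using hall i
  calc finrank k (LinearMap.ker (T - 1)) ≤ finrank k (∀ ω, E ω) :=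
        LinearMap.finrank_le_finrank_of_injective hΨ
    _ = _ := Module.finrank_pi_fintype k

end Decomposition

theorem two_mul_sum_finrank_le_of_disjoint {k V : Type*} [Field k] [AddCommGroup V] [Module k V]
    [FiniteDimensional k V] {α : Type*} [Fintype α] (e : α ≃ α) {E : α → Submodule k V}
    {U : Submodule k V} (hE : ∀ a, E a ≤ U) (hdisj : ∀ a, Disjoint (E a) (E (e a))) :
    2 * ∑ a, finrank k (E a) ≤ Fintype.card α * finrank k U :=
  calc 2 * ∑ a, finrank k (E a) = ∑ a, (finrank k (E a) + finrank k (E (e a))) := by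
        rw [sum_add_distrib, e.sum_comp fun a => finrank k (E a), two_mul]
    _ ≤ ∑ _a : α, finrank k U := sum_le_sum fun a _ => by
        rw [← Submodule.finrank_sup_add_finrank_inf_eq, (hdisj a).eq_bot, finrank_bot, add_zero]
        exact Submodule.finrank_mono (sup_le (hE a) (hE (e a)))
    _ = Fintype.card α * finrank k U := by simp

theorem exists_mul_apply_ne_one {M A : Type*} [Monoid M] [CommGroup A] (hM : ∀ y : M, y ^ 2 = 1)
    {φ ψ : M →* A} (h : φ ≠ ψ) : ∃ y, (φ * ψ) y ≠ 1 := by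
  obtain ⟨y, hy⟩ := DFunLike.ne_iff.1 h
  refine ⟨y, fun h1 => hy (mul_left_cancel ((?_ : φ y * φ y = 1).trans h1.symm))⟩
  rw [← map_mul, ← sq, hM, map_one]

section MapsTo

variable {k V G : Type*} [Field k] [AddCommGroup V] [Module k V] [Group G]
  (ρ : Representation k G V) {N : Subgroup G} {g : G} {φ ψ : N →* kˣ}

theorem mul_apply_mem_charEigenspace
    (hg : Set.MapsTo (ρ g) (charEigenspace (ρ.comp N.subtype) φ)
      (charEigenspace (ρ.comp N.subtype) ψ))
    (y : N) {w : V} (hw : w ∈ charEigenspace (ρ.comp N.subtype) φ) :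
    ρ (g * y) w ∈ charEigenspace (ρ.comp N.subtype) ψ := by
  have hw_y := mem_charEigenspace.1 hw y
  simp only [MonoidHom.coe_comp, Function.comp_apply, Subgroup.coe_subtype] at hw_y
  rw [map_mul, Module.End.mul_apply, hw_y, map_smul]
  exact Submodule.smul_mem _ _ (hg hw)

theorem sq_apply_of_mem_charEigenspace
    (hg : Set.MapsTo (ρ g) (charEigenspace (ρ.comp N.subtype) φ)
      (charEigenspace (ρ.comp N.subtype) ψ))
    (y : N) {w : V} (hw : w ∈ charEigenspace (ρ.comp N.subtype) φ) :
    (ρ (g * y) ^ 2) w = ((φ * ψ) y : k) • ρ g (ρ g w) := by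
  have hφ := mem_charEigenspace.1 hw y
  have hψ := mem_charEigenspace.1 (hg hw) y
  simp only [MonoidHom.coe_comp, Function.comp_apply, Subgroup.coe_subtype] at hφ hψ
  rw [sq, Module.End.mul_apply, map_mul, Module.End.mul_apply, Module.End.mul_apply, hφ,
    map_smul, map_smul, hψ]
  simp only [map_smul, smul_smul, MonoidHom.mul_apply, Units.val_mul]

theorem disjoint_inf_ker_sq_sub_one
    (hg : Set.MapsTo (ρ g) (charEigenspace (ρ.comp N.subtype) φ)
      (charEigenspace (ρ.comp N.subtype) ψ))
    {y₀ : N} (hy₀ : (φ * ψ) y₀ ≠ 1) (y : N) :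
    Disjoint (charEigenspace (ρ.comp N.subtype) φ ⊓ LinearMap.ker (ρ (g * y) ^ 2 - 1))
      (charEigenspace (ρ.comp N.subtype) φ ⊓
        LinearMap.ker (ρ (g * ((y₀ * y : N) : G)) ^ 2 - 1)) := by
  rw [Submodule.disjoint_def]
  rintro w ⟨hw, h₁⟩ ⟨-, h₂⟩
  simp only [SetLike.mem_coe, LinearMap.mem_ker, LinearMap.sub_apply, Module.End.one_apply,
    sub_eq_zero] at hw h₁ h₂
  rw [sq_apply_of_mem_charEigenspace ρ hg _ hw] at h₁
  rw [sq_apply_of_mem_charEigenspace ρ hg _ hw, map_mul, Units.val_mul, mul_smul, h₁] at h₂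
  by_contra hw0
  exact hy₀ (Units.ext (smul_left_injective k hw0 (h₂.trans (one_smul k w).symm)))

theorem three_mul_sum_finrank_inf_ker_pow_sub_one_le [FiniteDimensional k V] [Fintype N]
    (hN : ∀ y : N, y ^ 2 = 1) (hφψ : φ ≠ ψ)
    (hg : Set.MapsTo (ρ g) (charEigenspace (ρ.comp N.subtype) φ)
      (charEigenspace (ρ.comp N.subtype) ψ))
    {c : ℕ} (hc : 2 ≤ c) :
    3 * ∑ y : N, finrank k ↥(charEigenspace (ρ.comp N.subtype) φ ⊓
        LinearMap.ker (ρ (g * y) ^ c - 1)) ≤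
      Nat.card N * (c * finrank k (charEigenspace (ρ.comp N.subtype) φ)) := by
  rw [Nat.card_eq_fintype_card]
  rcases hc.eq_or_lt with rfl | hc
  · obtain ⟨y₀, hy₀⟩ := exists_mul_apply_ne_one hN hφψ
    have := two_mul_sum_finrank_le_of_disjoint (Equiv.mulLeft y₀) (fun _ => inf_le_left)
      (disjoint_inf_ker_sq_sub_one ρ hg hy₀)
    nlinarith
  · have hsum := sum_le_card_nsmul univ (fun y : N => finrank k ↥(charEigenspace
      (ρ.comp N.subtype) φ ⊓ LinearMap.ker (ρ (g * y) ^ c - 1))) _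
      fun y _ => Submodule.finrank_mono inf_le_left
    rw [card_univ, smul_eq_mul] at hsum
    nlinarith [Nat.mul_le_mul_right (Fintype.card N *
      finrank k (charEigenspace (ρ.comp N.subtype) φ)) hc]

end MapsTo

theorem stmt_10_general (k : Type*) [Field k]
    (V : Type*) [AddCommGroup V] [Module k V] [FiniteDimensional k V]
    (G : Type*) [Group G] (ρ : Representation k G V)
    (N : Subgroup G) [N.Normal] [Fintype N]
    (hN2 : ∀ y ∈ N, y ^ 2 = 1)
    (m : ℕ)
    (χ : Fin m → (N →* kˣ)) (hχ : Function.Injective χ)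
    (W : Fin m → Submodule k V)
    (hW : ∀ (i : Fin m) (v : V), v ∈ W i ↔ ∀ y : N, ρ (y : G) v = (χ i y : k) • v)
    (hsup : ⨆ i, W i = ⊤) (hne : ∀ i, W i ≠ ⊥)
    (g : G) (hg : ∀ i, Submodule.map (ρ g) (W i) ≠ W i) :
    3 * ∑ y : N, Module.finrank k (LinearMap.ker (ρ (g * (y : G)) - 1)) ≤
        Nat.card N * Module.finrank k V ∧
      ∃ y : N, 3 * Module.finrank k (LinearMap.ker (ρ (g * (y : G)) - 1)) ≤
        Module.finrank k V := by
  obtain rfl : W = fun i => charEigenspace (ρ.comp N.subtype) (χ i) := funext fun i =>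
    Submodule.ext fun v => (hW i v).trans (mem_charEigenspace (ρ := ρ.comp N.subtype)).symm
  set W : Fin m → Submodule k V := fun i => charEigenspace (ρ.comp N.subtype) (χ i)
  let : DirectSum.Decomposition W := (DirectSum.isInternal_submodule_of_iSupIndep_of_iSup_eq_top
    ((iSupIndep_charEigenspace _).comp hχ) hsup).chooseDecomposition
  obtain ⟨σ, hσ⟩ : ∃ σ : Equiv.Perm (Fin m), ∀ i, (W i).map (ρ g) = W (σ i) :=
    exists_perm_map_charEigenspace_eq ρ N hχ hsup hne g
  have hσ_ne : ∀ i, σ i ≠ i := fun i h => hg i (by rw [hσ, h])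
  have hmaps : ∀ i, Set.MapsTo (ρ g) (W i) (W (σ i)) := fun i w hw =>
    hσ i ▸ Submodule.mem_map_of_mem hw
  have hdimV : finrank k V = ∑ ω : Quotient (Equiv.Perm.SameCycle.setoid σ),
      #(σ.cycleOf ω.out).support * finrank k (W ω.out) := by
    rw [(DirectSum.decomposeLinearEquiv W).finrank_eq, finrank_directSum]
    refine sum_eq_sum_quotient_sameCycle hσ_ne fun i => ?_
    rw [← hσ i]
    exact (Submodule.equivMapOfInjective _ (ρ.apply_bijective g).injective _).finrank_eq.symm
  have hbound : 3 * ∑ y : N, finrank k (LinearMap.ker (ρ (g * (y : G)) - 1)) ≤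
      Nat.card N * finrank k V := calc
    _ ≤ 3 * ∑ y : N, ∑ ω : Quotient (Equiv.Perm.SameCycle.setoid σ),
        finrank k ↥(W ω.out ⊓ LinearMap.ker (ρ (g * y) ^ #(σ.cycleOf ω.out).support - 1)) := by
      gcongr with y
      exact finrank_ker_sub_one_le_sum_sameCycle W
        fun i _ hw => mul_apply_mem_charEigenspace ρ (hmaps i) y hw
    _ = ∑ ω : Quotient (Equiv.Perm.SameCycle.setoid σ), 3 * ∑ y : N,
        finrank k ↥(W ω.out ⊓ LinearMap.ker (ρ (g * y) ^ #(σ.cycleOf ω.out).support - 1)) := by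
      rw [sum_comm, mul_sum]
    _ ≤ ∑ ω : Quotient (Equiv.Perm.SameCycle.setoid σ),
        Nat.card N * (#(σ.cycleOf ω.out).support * finrank k (W ω.out)) :=
      sum_le_sum fun ω _ => three_mul_sum_finrank_inf_ker_pow_sub_one_le ρ
        (fun y => Subtype.ext (hN2 y y.2)) (hχ.ne (hσ_ne _).symm) (hmaps _)
        (Equiv.Perm.two_le_card_support_cycleOf_iff.2 (hσ_ne _))
    _ = Nat.card N * finrank k V := by rw [← mul_sum, hdimV]
  refine ⟨hbound, ?_⟩
  obtain ⟨y, -, hy⟩ := exists_le_of_sum_le (s := univ)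
    (f := fun y : N => 3 * finrank k (LinearMap.ker (ρ (g * (y : G)) - 1)))
    (g := fun _ => finrank k V) univ_nonempty
    (by rwa [← mul_sum, sum_const, card_univ, smul_eq_mul, ← Nat.card_eq_fintype_card])
  exact ⟨y, hy⟩

/-- Let `G ≤ GL(V)` be finite and irreducible (`k` algebraically closed),
`N ⊴ G` a normal elementary abelian `2`-subgroup acting non-homogeneously, with
homogeneous components `W i` (`i : Fin m`, `m > 1`) given by distinct
characters `χ i` of `N`, and let `g ∈ G` act without fixed points on the set of
components. Then the average over `y ∈ N` of `dim C_V(g y)` is at most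
`(1/3) dim V`; in particular some `h ∈ gN` has `dim C_V(h) ≤ (1/3) dim V`. -/
theorem stmt_10 (k : Type*) [Field k] [IsAlgClosed k]
    (V : Type*) [AddCommGroup V] [Module k V] [FiniteDimensional k V]
    (hdim : 2 ≤ Module.finrank k V)
    (G : Type*) [Group G] [Finite G] (ρ : Representation k G V)
    (hfaithful : Function.Injective ρ)
    (hirr : ∀ U : Submodule k V, (∀ g : G, ∀ v ∈ U, ρ g v ∈ U) → U = ⊥ ∨ U = ⊤)
    (N : Subgroup G) [N.Normal] [Fintype N]
    (hN2 : ∀ y ∈ N, y ^ 2 = 1)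
    (m : ℕ) (hm : 1 < m)
    (χ : Fin m → (N →* kˣ)) (hχ : Function.Injective χ)
    (W : Fin m → Submodule k V)
    (hW : ∀ (i : Fin m) (v : V), v ∈ W i ↔ ∀ y : N, ρ (y : G) v = (χ i y : k) • v)
    (hsup : ⨆ i, W i = ⊤) (hne : ∀ i, W i ≠ ⊥)
    (g : G) (hg : ∀ i, Submodule.map (ρ g) (W i) ≠ W i) :
    3 * ∑ y : N, Module.finrank k (LinearMap.ker (ρ (g * (y : G)) - 1)) ≤
        Nat.card N * Module.finrank k V ∧
      ∃ y : N, 3 * Module.finrank k (LinearMap.ker (ρ (g * (y : G)) - 1)) ≤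
        Module.finrank k V :=
  stmt_10_general k V G ρ N hN2 m χ hχ W hW hsup hne g hg
end

section
/- Let L = A₄ and let W be the irreducible 3-dimensional representation of L over a field of characteristic ≠ 2. For m ≥ 1 let G(m) = L^m act on V(m) = W^{⊗m}. Then for every g ∈ G(m), dim C_{V(m)}(g) ≥ (1/9) dim V(m). -/
/-!
In a suitable basis `e₀, e₁, e₂` of `W` the Klein four-subgroup of `A₄` acts by diagonal sign
matrices and the 3-cycle `(0 1 2)` permutes the basis cyclically. Indeed the Klein four-group
cannot act trivially, since a group of order 3 has no irreducible 3-dimensional representation,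
and `(0 1 2)` permutes its three nontrivial characters. So every `g ∈ L^m` acts monomially on the
tensor basis `e_J`, `J : Fin m → Fin 3`: it sends `e_J` to `±e_{J + d}`. Every orbit of
`J ↦ J + d` along which the product of the signs is `1` carries a fixed vector. The orbits have
size `1` or `3`, and the orbit sign only depends on the coordinates where `d` vanishes. Fixing
one such coordinate where the sign varies, and one coordinate where `d ≠ 0`, leaves at least
`3 ^ m / 9` orbits of sign `1`.
-/

open scoped TensorProduct

open Module Finset Function Equiv

namespace A4Rep

abbrev A4 := alternatingGroup (Fin 4)

def dblA : A4 := ⟨swap 0 1 * swap 2 3, by rw [Perm.mem_alternatingGroup]; decide⟩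

def dblB : A4 := ⟨swap 0 2 * swap 1 3, by rw [Perm.mem_alternatingGroup]; decide⟩

def cyc : A4 := ⟨swap 0 1 * swap 1 2, by rw [Perm.mem_alternatingGroup]; decide⟩

theorem eq_mul_cyc_pow (g : A4) :
    ∃ v ∈ ({1, dblA, dblB, dblA * dblB} : Finset A4), ∃ j : Fin 3, g = v * cyc ^ (j : ℕ) := by
  revert g
  decide

section Relations

variable {k W : Type*} [CommSemiring k] [AddCommMonoid W] [Module k W] (ρ : Representation k A4 W)

theorem apply_apply_eq_of_mul_eq {a b a' b' : A4} (h : a * b = a' * b') (w : W) :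
    ρ a (ρ b w) = ρ a' (ρ b' w) := by
  rw [← Module.End.mul_apply, ← map_mul, h, map_mul, Module.End.mul_apply]

theorem dblA_dblA_apply (w : W) : ρ dblA (ρ dblA w) = w := by
  simpa using apply_apply_eq_of_mul_eq ρ (by decide : dblA * dblA = 1 * 1) w

theorem dblB_dblB_apply (w : W) : ρ dblB (ρ dblB w) = w := by
  simpa using apply_apply_eq_of_mul_eq ρ (by decide : dblB * dblB = 1 * 1) w

theorem dblA_dblB_apply (w : W) : ρ dblA (ρ dblB w) = ρ dblB (ρ dblA w) :=
  apply_apply_eq_of_mul_eq ρ (by decide) w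

theorem dblA_cyc_apply (w : W) : ρ dblA (ρ cyc w) = ρ cyc (ρ dblB w) :=
  apply_apply_eq_of_mul_eq ρ (by decide) w

theorem dblB_cyc_apply (w : W) : ρ dblB (ρ cyc w) = ρ cyc (ρ dblA (ρ dblB w)) := by
  rw [apply_apply_eq_of_mul_eq ρ (by decide : dblB * cyc = cyc * (dblA * dblB)), map_mul,
    Module.End.mul_apply]

theorem cyc_cyc_cyc_apply (w : W) : ρ cyc (ρ cyc (ρ cyc w)) = w := by
  rw [apply_apply_eq_of_mul_eq ρ (by decide : cyc * cyc = cyc⁻¹ * 1), map_one,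
    Module.End.one_apply, Representation.inv_self_apply]

theorem cyc_injective : Injective (ρ cyc) :=
  LeftInverse.injective (ρ.inv_self_apply cyc)

theorem eigenvalues_cyc_apply {x : W} {a b : k} (hA : ρ dblA x = a • x) (hB : ρ dblB x = b • x) :
    ρ dblA (ρ cyc x) = b • ρ cyc x ∧ ρ dblB (ρ cyc x) = (a * b) • ρ cyc x := by
  refine ⟨by rw [dblA_cyc_apply, hB, map_smul], ?_⟩
  rw [dblB_cyc_apply, hB, map_smul, hA]
  simp only [map_smul, smul_smul, mul_comm b a]

theorem map_mem_of_generators (U : Submodule k W) (hA : ∀ w ∈ U, ρ dblA w ∈ U)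
    (hB : ∀ w ∈ U, ρ dblB w ∈ U) (hC : ∀ w ∈ U, ρ cyc w ∈ U) (g : A4) :
    ∀ w ∈ U, ρ g w ∈ U := by
  let stab : Submonoid A4 :=
    { carrier := {g | ∀ w ∈ U, ρ g w ∈ U}
      mul_mem' := fun ha hb w hw => by rw [map_mul, Module.End.mul_apply]; exact ha _ (hb w hw)
      one_mem' := fun w hw => by simpa using hw }
  obtain ⟨v, hv, j, rfl⟩ := eq_mul_cyc_pow g
  refine stab.mul_mem ?_ (stab.pow_mem hC _)
  simp only [Finset.mem_insert, Finset.mem_singleton] at hv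
  rcases hv with rfl | rfl | rfl | rfl
  exacts [stab.one_mem, hA, hB, stab.mul_mem hA hB]

end Relations

theorem exists_invariant_of_cube_eq_one {k W : Type*} [DivisionRing k] [AddCommGroup W]
    [Module k W] [Nontrivial W] (C : W →ₗ[k] W) (hC : ∀ w, C (C (C w)) = w) :
    ∃ U : Submodule k W, U ≠ ⊥ ∧ finrank k U ≤ 2 ∧ ∀ w ∈ U, C w ∈ U := by
  obtain ⟨w, hw⟩ := exists_ne (0 : W)
  by_cases hfix : C w = w
  · refine ⟨Submodule.span k {w}, by simpa using hw, ?_, fun x hx => ?_⟩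
    · exact (finrank_span_singleton hw).le.trans (by norm_num)
    · obtain ⟨a, rfl⟩ := Submodule.mem_span_singleton.1 hx
      rw [map_smul, hfix]
      exact hx
  · set U := Submodule.span k {w - C w, C w - C (C w)}
    have h₁ : w - C w ∈ U := Submodule.subset_span (by simp)
    have h₂ : C w - C (C w) ∈ U := Submodule.subset_span (by simp)
    refine ⟨U, ?_, ?_, fun x hx => ?_⟩
    · intro h
      rw [h, Submodule.mem_bot, sub_eq_zero] at h₁
      exact hfix h₁.symm
    · classical
      refine (finrank_span_le_card _).trans ?_
      simpa only [Set.toFinset_insert, Set.toFinset_singleton] using Finset.card_le_two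
    · -- `C (C w - C (C w)) = C (C w) - w` is minus the sum of the two spanning vectors
      have hUC : U ≤ U.comap C := by
        refine Submodule.span_le.2 ?_
        rintro _ (rfl | rfl)
        · simpa using h₂
        · simpa [hC, ← neg_add', show C w - C (C w) + (w - C w) = w - C (C w) by abel]
            using U.neg_mem (U.add_mem h₂ h₁)
      exact hUC hx

theorem apply_mem_span_range_of_monomial {k W ι : Type*} [Semiring k] [AddCommMonoid W]
    [Module k W] (v : ι → W) (f : W →ₗ[k] W) (hf : ∀ r, ∃ a : k, ∃ r', f (v r) = a • v r') :
    ∀ w ∈ Submodule.span k (Set.range v), f w ∈ Submodule.span k (Set.range v) := by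
  intro w hw
  refine (Submodule.span_le (p := (Submodule.span k _).comap f)).2
    (Set.range_subset_iff.2 fun r => ?_) hw
  obtain ⟨a, r', h⟩ := hf r
  rw [SetLike.mem_coe, Submodule.mem_comap, h]
  exact Submodule.smul_mem _ a (Submodule.subset_span ⟨r', rfl⟩)

section Irreducible

variable {k W : Type*} [Field k] [AddCommGroup W] [Module k W] {ρ : Representation k A4 W}

theorem exists_dblA_apply_ne
    (hirr : ∀ U : Submodule k W, (∀ g : A4, ∀ w ∈ U, ρ g w ∈ U) → U = ⊥ ∨ U = ⊤)
    (hdim : finrank k W = 3) : ∃ w, ρ dblA w ≠ w := by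
  by_contra! hA
  have hB : ∀ w, ρ dblB w = w := fun w => cyc_injective ρ (by rw [← dblA_cyc_apply, hA])
  have : Nontrivial W := Module.nontrivial_of_finrank_pos (R := k) (by omega)
  obtain ⟨U, hU, hUdim, hUC⟩ := exists_invariant_of_cube_eq_one (ρ cyc) (cyc_cyc_cyc_apply ρ)
  have hinv := map_mem_of_generators ρ U (fun w hw => (hA w).symm ▸ hw)
    (fun w hw => (hB w).symm ▸ hw) hUC
  rcases hirr U hinv with rfl | rfl
  · exact hU rfl
  · rw [finrank_top, hdim] at hUdim
    omega

theorem exists_dblA_dblB_eigenvector (h2 : (2 : k) ≠ 0)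
    (hirr : ∀ U : Submodule k W, (∀ g : A4, ∀ w ∈ U, ρ g w ∈ U) → U = ⊥ ∨ U = ⊤)
    (hdim : finrank k W = 3) : ∃ e, e ≠ 0 ∧ ρ dblA e = e ∧ ρ dblB e = -e := by
  -- `x` is a `-1`-eigenvector of `dblA`; split it along `dblB` (as `2 ≠ 0`) and move a nonzero
  -- part into the joint eigenspace for `(1, -1)` by `cyc`, which maps `(a, b)` to `(b, a * b)`
  obtain ⟨w, hw⟩ := exists_dblA_apply_ne hirr hdim
  set x := w - ρ dblA w
  have hx : x ≠ 0 := sub_ne_zero.2 hw.symm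
  have hxA : ρ dblA x = -x := by simp [x, dblA_dblA_apply]
  have hBx : ρ dblA (ρ dblB x) = -ρ dblB x := by rw [dblA_dblB_apply, hxA, map_neg]
  have hp : ρ dblA (x + ρ dblB x) = (-1 : k) • (x + ρ dblB x) ∧
      ρ dblB (x + ρ dblB x) = (1 : k) • (x + ρ dblB x) := by
    constructor <;> simp only [map_add, hxA, hBx, dblB_dblB_apply] <;> module
  have hm : ρ dblA (x - ρ dblB x) = (-1 : k) • (x - ρ dblB x) ∧
      ρ dblB (x - ρ dblB x) = (-1 : k) • (x - ρ dblB x) := by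
    constructor <;> simp only [map_sub, hxA, hBx, dblB_dblB_apply] <;> module
  have hC0 : ∀ y, ρ cyc y = 0 → y = 0 := (injective_iff_map_eq_zero _).1 (cyc_injective ρ)
  by_cases hp0 : x + ρ dblB x = 0
  · have hm0 : x - ρ dblB x ≠ 0 := fun hm0 =>
      hx (smul_right_injective W h2 (by simpa [hp0, hm0] using
        (by module : (2 : k) • x = (x + ρ dblB x) + (x - ρ dblB x))))
    obtain ⟨hA₁, hB₁⟩ := eigenvalues_cyc_apply ρ hm.1 hm.2
    obtain ⟨hA₂, hB₂⟩ := eigenvalues_cyc_apply ρ hA₁ hB₁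
    refine ⟨ρ cyc (ρ cyc (x - ρ dblB x)), fun h => hm0 (hC0 _ (hC0 _ h)), ?_, ?_⟩
    · rw [hA₂]; norm_num
    · rw [hB₂]; norm_num
  · obtain ⟨hA₁, hB₁⟩ := eigenvalues_cyc_apply ρ hp.1 hp.2
    refine ⟨ρ cyc (x + ρ dblB x), fun h => hp0 (hC0 _ h), ?_, ?_⟩
    · rw [hA₁]; norm_num
    · rw [hB₁, mul_one, neg_one_smul]

theorem exists_monomial_basis (h2 : (2 : k) ≠ 0)
    (hirr : ∀ U : Submodule k W, (∀ g : A4, ∀ w ∈ U, ρ g w ∈ U) → U = ⊥ ∨ U = ⊤)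
    (hdim : finrank k W = 3) :
    ∃ e : Basis (Fin 3) k W, (∀ r, ρ cyc (e r) = e (r + 1)) ∧
      (∀ r, ρ dblA (e r) = (if r = 0 then (1 : k) else -1) • e r) ∧
      (∀ r, ρ dblB (e r) = (if r = 2 then (1 : k) else -1) • e r) := by
  obtain ⟨e₀, he₀, hA, hB⟩ := exists_dblA_dblB_eigenvector h2 hirr hdim
  obtain ⟨hA₁, hB₁⟩ := eigenvalues_cyc_apply ρ (a := 1) (b := -1) (by simpa) (by simpa)
  obtain ⟨hA₂, hB₂⟩ := eigenvalues_cyc_apply ρ hA₁ hB₁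
  set v : Fin 3 → W := ![e₀, ρ cyc e₀, ρ cyc (ρ cyc e₀)]
  have hCv : ∀ r, ρ cyc (v r) = v (r + 1) := by
    intro r
    fin_cases r
    exacts [rfl, rfl, cyc_cyc_cyc_apply ρ e₀]
  have hAv : ∀ r, ρ dblA (v r) = (if r = 0 then (1 : k) else -1) • v r := by
    intro r
    fin_cases r <;> simp [v, hA, hA₁, hA₂]
  have hBv : ∀ r, ρ dblB (v r) = (if r = 2 then (1 : k) else -1) • v r := by
    intro r
    fin_cases r <;> simp [v, hB, hB₁, hB₂]
  have hspan : ⊤ ≤ Submodule.span k (Set.range v) := by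
    have hinv := map_mem_of_generators ρ _
      (apply_mem_span_range_of_monomial v _ fun r => ⟨_, r, hAv r⟩)
      (apply_mem_span_range_of_monomial v _ fun r => ⟨_, r, hBv r⟩)
      (apply_mem_span_range_of_monomial v _ fun r => ⟨1, r + 1, by rw [hCv, one_smul]⟩)
    rcases hirr _ hinv with h | h
    · exact absurd (h ▸ Submodule.subset_span ⟨0, rfl⟩ : v 0 ∈ (⊥ : Submodule k W)) (by simpa [v])
    · exact h.ge
  refine ⟨basisOfTopLeSpanOfCardEqFinrank v hspan (by simp [hdim]), ?_⟩
  simpa only [coe_basisOfTopLeSpanOfCardEqFinrank] using ⟨hCv, hAv, hBv⟩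

end Irreducible

def IsSignPattern {k : Type*} [Ring k] (s : Fin 3 → k) : Prop :=
  (∀ r, s r = 1 ∨ s r = -1) ∧ s 0 * s 1 * s 2 = 1

section SignPattern

variable {k : Type*} [CommRing k] {s : Fin 3 → k}

theorem isSignPattern_one : IsSignPattern (fun _ : Fin 3 => (1 : k)) :=
  ⟨fun _ => Or.inl rfl, by simp⟩

theorem isSignPattern_ite (a : Fin 3) : IsSignPattern fun r => if r = a then (1 : k) else -1 := by
  refine ⟨fun r => by dsimp only; split_ifs <;> simp, ?_⟩
  fin_cases a <;> simp

theorem IsSignPattern.mul {t : Fin 3 → k} (hs : IsSignPattern s) (ht : IsSignPattern t) :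
    IsSignPattern (s * t) := by
  refine ⟨fun r => ?_, ?_⟩
  · rcases hs.1 r with h | h <;> rcases ht.1 r with h' | h' <;> simp [h, h']
  · simp only [Pi.mul_apply]
    linear_combination (t 0 * t 1 * t 2) * hs.2 + ht.2

theorem IsSignPattern.exists_eq (hk : (-1 : k) ≠ 1) (hs : IsSignPattern s) (hne : ∃ r, s r ≠ 1)
    {q : k} (hq : q = 1 ∨ q = -1) : ∃ r, s r = q := by
  obtain ⟨r, hr⟩ := hne
  rcases hq with rfl | rfl
  · by_contra! h
    have hneg : ∀ r, s r = -1 := fun r => (hs.1 r).resolve_left (h r)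
    exact hk (by simpa [hneg] using hs.2)
  · exact ⟨r, (hs.1 r).resolve_left hr⟩

theorem IsSignPattern.mul_shift (hs : IsSignPattern s) (x d : Fin 3) :
    s (x + d) * s (x + d + d) * s (x + d + d + d) = if d = 0 then s x else 1 := by
  obtain ⟨hpm, hprod⟩ := hs
  split_ifs with hd
  · subst hd
    rcases hpm x with h | h <;> simp [h]
  · fin_cases d
    · exact absurd rfl hd
    all_goals fin_cases x <;> simp <;> linear_combination hprod

theorem prod_eq_one_or_eq_neg_one_of_isSignPattern {ι : Type*} {f : ι → Fin 3 → k}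
    (hf : ∀ i, IsSignPattern (f i)) (t : Finset ι) (J : ι → Fin 3) :
    ∏ i ∈ t, f i (J i) = 1 ∨ ∏ i ∈ t, f i (J i) = -1 := by
  refine Finset.prod_induction _ (fun x => x = 1 ∨ x = -1) ?_ (Or.inl rfl) fun i _ => (hf i).1 _
  rintro a b (rfl | rfl) (rfl | rfl) <;> simp

end SignPattern

open Fin.NatCast in
theorem exists_signed_shift {k W : Type*} [CommRing k] [AddCommGroup W] [Module k W]
    (ρ : Representation k A4 W) (e : Fin 3 → W) (hC : ∀ r, ρ cyc (e r) = e (r + 1))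
    (hA : ∀ r, ρ dblA (e r) = (if r = 0 then (1 : k) else -1) • e r)
    (hB : ∀ r, ρ dblB (e r) = (if r = 2 then (1 : k) else -1) • e r) (g : A4) :
    ∃ (d : Fin 3) (s : Fin 3 → k), IsSignPattern s ∧ ∀ r, ρ g (e r) = s (r + d) • e (r + d) := by
  obtain ⟨v, hv, j, rfl⟩ := eq_mul_cyc_pow g
  have hpow : ∀ (n : ℕ) r, ρ (cyc ^ n) (e r) = e (r + (n : Fin 3)) := by
    intro n
    induction n with
    | zero => simp
    | succ n ih =>
      intro r
      rw [pow_succ, map_mul, Module.End.mul_apply, hC, ih, Nat.cast_succ, add_right_comm, add_assoc]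
  have hdiag : ∃ s : Fin 3 → k, IsSignPattern s ∧ ∀ r, ρ v (e r) = s r • e r := by
    simp only [Finset.mem_insert, Finset.mem_singleton] at hv
    rcases hv with rfl | rfl | rfl | rfl
    · exact ⟨_, isSignPattern_one, by simp⟩
    · exact ⟨_, isSignPattern_ite 0, hA⟩
    · exact ⟨_, isSignPattern_ite 2, hB⟩
    · refine ⟨_, (isSignPattern_ite 0).mul (isSignPattern_ite 2), fun r => ?_⟩
      rw [map_mul, Module.End.mul_apply, hB, map_smul, hA, smul_smul, mul_comm, Pi.mul_apply]
  obtain ⟨s, hs, hvs⟩ := hdiag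
  exact ⟨j, s, hs, fun r => by rw [map_mul, Module.End.mul_apply, hpow, Fin.cast_val_eq_self, hvs]⟩

theorem card_le_card_mul_of_exists_update {ι α : Type*} [DecidableEq ι] [Fintype α]
    {S S' : Finset (ι → α)} (i : ι) (h : ∀ J ∈ S, ∃ x, update J i x ∈ S') :
    #S ≤ #S' * Fintype.card α := by
  rcases S.eq_empty_or_nonempty with rfl | ⟨J₀, -⟩
  · simp
  have : Nonempty α := ⟨J₀ i⟩
  choose! x hx using h
  calc #S ≤ #(S' ×ˢ (univ : Finset α)) := by
        refine card_le_card_of_injOn (fun J => (update J i (x J), J i))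
          (fun J hJ => mem_product.2 ⟨hx J hJ, mem_univ _⟩) ?_
        intro J _ J' _ hJJ'
        obtain ⟨hupd, hi⟩ := Prod.ext_iff.1 hJJ'
        funext j
        by_cases hj : j = i
        · exact hj ▸ hi
        · simpa [hj] using congrFun hupd j
    _ = #S' * Fintype.card α := by rw [card_product, card_univ]

open scoped Classical in
theorem three_pow_card_le_three_mul_card_prod_eq_one {k ι : Type*} [CommRing k] [Fintype ι]
    [DecidableEq ι] (hk : (-1 : k) ≠ 1) {f : ι → Fin 3 → k} (hf : ∀ i, IsSignPattern (f i)) :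
    3 ^ Fintype.card ι ≤ 3 * #{J : ι → Fin 3 | ∏ i, f i (J i) = 1} := by
  by_cases hne : ∃ i, ∃ r, f i r ≠ 1
  · obtain ⟨i, hi⟩ := hne
    have key : ∀ J ∈ (univ : Finset (ι → Fin 3)), ∃ x,
        update J i x ∈ ({J | ∏ i, f i (J i) = 1} : Finset _) := by
      intro J _
      have hq := prod_eq_one_or_eq_neg_one_of_isSignPattern hf (univ \ {i}) J
      obtain ⟨x, hx⟩ := (hf i).exists_eq hk hi hq
      refine ⟨x, mem_filter.2 ⟨mem_univ _, ?_⟩⟩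
      simp_rw [apply_update (fun j => f j), prod_update_of_mem (mem_univ i), hx]
      rcases hq with h | h <;> rw [h] <;> simp
    simpa [mul_comm] using card_le_card_mul_of_exists_update i key
  · push Not at hne
    simp [hne]

theorem add_add_add_eq_self_of_fin_three {ι : Type*} (J d : ι → Fin 3) : J + d + d + d = J := by
  funext i
  simp only [Pi.add_apply]
  generalize J i = a
  generalize d i = b
  revert a b
  decide

theorem fin_three_add_self_ne_zero {b : Fin 3} (hb : b ≠ 0) : b + b ≠ 0 := by
  revert b
  decide

section Monomial

variable {k M κ : Type*} [Field k] [AddCommGroup M] [Module k M]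

theorem card_le_finrank_of_dual_family [Module.Finite k M] [DecidableEq κ] (U : Submodule k M)
    (S : Finset κ) (v : κ → M) (φ : κ → Module.Dual k M) (hvU : ∀ J ∈ S, v J ∈ U)
    (hφv : ∀ J ∈ S, ∀ J' ∈ S, φ J' (v J) = if J = J' then 1 else 0) :
    #S ≤ finrank k U := by
  let w : S → U := fun J => ⟨v J, hvU J J.2⟩
  have hw : LinearIndependent k w := by
    apply LinearIndependent.of_comp ((LinearMap.pi fun J' : S => φ J') ∘ₗ U.subtype)
    convert Pi.linearIndependent_single_one S k using 1
    · funext J J'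
      simp only [LinearMap.coe_comp, comp_apply, Submodule.subtype_apply, LinearMap.pi_apply, w]
      rw [hφv J J.2 J' J'.2, Pi.single_apply]
      simp only [Subtype.ext_iff, eq_comm]
    · rfl
  simpa using hw.fintype_card_le_finrank

theorem orbitSum_mem_ker_sub_id (B : κ → M) (T : M →ₗ[k] M) (σ : κ → κ) (Λ : κ → k)
    (hT : ∀ J, T (B J) = Λ J • B (σ J)) {J : κ} (hσ : σ (σ (σ J)) = J)
    (hΛ : Λ J * Λ (σ J) * Λ (σ (σ J)) = 1) :
    B J + Λ J • B (σ J) + (Λ J * Λ (σ J)) • B (σ (σ J)) ∈ LinearMap.ker (T - LinearMap.id) := by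
  rw [LinearMap.mem_ker, LinearMap.sub_apply, LinearMap.id_apply, sub_eq_zero]
  simp only [map_add, map_smul, hT, hσ, smul_smul, hΛ, one_smul]
  abel

variable {ι : Type*}

def orbitPattern (d : ι → Fin 3) (s : ι → Fin 3 → k) (i : ι) : Fin 3 → k :=
  if d i = 0 then s i else fun _ => 1

theorem isSignPattern_orbitPattern {d : ι → Fin 3} {s : ι → Fin 3 → k}
    (hs : ∀ i, IsSignPattern (s i)) (i : ι) : IsSignPattern (orbitPattern d s i) := by
  unfold orbitPattern
  split_ifs
  exacts [hs i, isSignPattern_one]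

theorem prod_mul_prod_shift_mul_prod_shift [Fintype ι] {d : ι → Fin 3} {s : ι → Fin 3 → k}
    (hs : ∀ i, IsSignPattern (s i)) (J : ι → Fin 3) :
    (∏ i, s i (J i + d i)) * (∏ i, s i ((J + d) i + d i)) * (∏ i, s i ((J + d + d) i + d i)) =
      ∏ i, orbitPattern d s i (J i) := by
  simp only [← prod_mul_distrib, Pi.add_apply, (hs _).mul_shift, orbitPattern]
  exact prod_congr rfl fun i _ => by split_ifs <;> rfl

variable (B : Basis (ι → Fin 3) k M) (T : M →ₗ[k] M)

open scoped Classical in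
theorem card_le_finrank_ker_of_diagonal [Fintype ι] [DecidableEq ι] (s : ι → Fin 3 → k)
    (hT : ∀ J, T (B J) = (∏ i, s i (J i)) • B J) :
    #{J : ι → Fin 3 | ∏ i, s i (J i) = 1} ≤ finrank k (LinearMap.ker (T - LinearMap.id)) := by
  have : Module.Finite k M := Module.Finite.of_basis B
  refine card_le_finrank_of_dual_family _ _ B B.coord (fun J hJ => ?_)
    fun J _ J' _ => by simp [Finsupp.single_apply]
  rw [mem_filter] at hJ
  simp [hT, hJ.2]

open scoped Classical in
theorem card_le_finrank_ker_of_shift_ne_zero [Fintype ι] [DecidableEq ι] {d : ι → Fin 3}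
    {s : ι → Fin 3 → k} (hs : ∀ i, IsSignPattern (s i))
    (hT : ∀ J, T (B J) = (∏ i, s i (J i + d i)) • B (J + d))
    {i₀ : ι} (hi₀ : d i₀ ≠ 0) :
    #{J : ι → Fin 3 | ∏ i, orbitPattern d s i (J i) = 1 ∧ J i₀ = 0} ≤
      finrank k (LinearMap.ker (T - LinearMap.id)) := by
  have : Module.Finite k M := Module.Finite.of_basis B
  let Λ : (ι → Fin 3) → k := fun J => ∏ i, s i (J i + d i)
  refine card_le_finrank_of_dual_family _ _
    (fun J => B J + Λ J • B (J + d) + (Λ J * Λ (J + d)) • B (J + d + d)) B.coord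
    (fun J hJ => ?_) fun J hJ J' hJ' => ?_
  · rw [mem_filter] at hJ
    refine orbitSum_mem_ker_sub_id B T (· + d) Λ hT (add_add_add_eq_self_of_fin_three J d) ?_
    exact (prod_mul_prod_shift_mul_prod_shift hs J).trans hJ.2.1
  · simp only [mem_filter, mem_univ, true_and] at hJ hJ'
    -- the `i₀`-coordinates of `J + d` and `J + d + d` are `d i₀ ≠ 0` and `d i₀ + d i₀ ≠ 0`
    have hne₁ : J + d ≠ J' := fun h => hi₀ (by simpa [hJ.2, hJ'.2] using congrFun h i₀)
    have hne₂ : J + d + d ≠ J' := fun h =>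
      fin_three_add_self_ne_zero hi₀ (by simpa [hJ.2, hJ'.2] using congrFun h i₀)
    simp [hne₁, hne₂, Finsupp.single_apply]

theorem three_pow_card_le_nine_mul_finrank_ker [Fintype ι] [DecidableEq ι] (hk : (-1 : k) ≠ 1)
    (d : ι → Fin 3) (s : ι → Fin 3 → k) (hs : ∀ i, IsSignPattern (s i))
    (hT : ∀ J, T (B J) = (∏ i, s i (J i + d i)) • B (J + d)) :
    3 ^ Fintype.card ι ≤ 9 * finrank k (LinearMap.ker (T - LinearMap.id)) := by
  classical
  have h₁ :=
    three_pow_card_le_three_mul_card_prod_eq_one hk (isSignPattern_orbitPattern (d := d) hs)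
  by_cases hd : d = 0
  · subst hd
    have h₂ := card_le_finrank_ker_of_diagonal B T s (by simpa using hT)
    simp only [orbitPattern, Pi.zero_apply, ↓reduceIte] at h₁
    omega
  obtain ⟨i₀, hi₀⟩ : ∃ i₀, d i₀ ≠ 0 := Function.ne_iff.1 hd
  have hupd : ∀ J ∈ ({J | ∏ i, orbitPattern d s i (J i) = 1} : Finset _), update J i₀ 0 ∈
      ({J | ∏ i, orbitPattern d s i (J i) = 1 ∧ J i₀ = 0} : Finset _) := by
    intro J hJ
    have : ∏ i, orbitPattern d s i (update J i₀ 0 i) = ∏ i, orbitPattern d s i (J i) :=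
      prod_congr rfl fun i _ => by
        by_cases h : i = i₀
        · subst h; simp [orbitPattern, hi₀]
        · simp [h]
    simp_all
  have h₂ := card_le_card_mul_of_exists_update i₀ fun J hJ => ⟨0, hupd J hJ⟩
  have h₃ := card_le_finrank_ker_of_shift_ne_zero B T hs hT hi₀
  rw [Fintype.card_fin] at h₂
  omega

end Monomial

theorem piTensorProduct_map_basis_apply {k W ι κ : Type*} [Field k] [AddCommGroup W]
    [Module k W] [Fintype ι] [Add κ] (e : Basis κ k W) (f : ι → W →ₗ[k] W) (d : ι → κ)
    (s : ι → κ → k) (hf : ∀ i r, f i (e r) = s i (r + d i) • e (r + d i)) (J : ι → κ) :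
    PiTensorProduct.map f (Basis.piTensorProduct (fun _ => e) J) =
      (∏ i, s i (J i + d i)) • Basis.piTensorProduct (fun _ => e) (J + d) := by
  simp only [Basis.piTensorProduct_apply, PiTensorProduct.map_tprod, hf, Pi.add_apply]
  exact MultilinearMap.map_smul_univ _ _ _

end A4Rep

theorem stmt_14_general (k : Type) [Field k] (hchar : ringChar k ≠ 2)
    (W : Type) [AddCommGroup W] [Module k W]
    (ρ : Representation k (alternatingGroup (Fin 4)) W)
    (hirr : ∀ U : Submodule k W,
      (∀ g : alternatingGroup (Fin 4), ∀ w ∈ U, ρ g w ∈ U) → U = ⊥ ∨ U = ⊤)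
    (hdim : Module.finrank k W = 3)
    (m : ℕ) (g : Fin m → alternatingGroup (Fin 4)) :
    Module.finrank k (⨂[k] (_ : Fin m), W) ≤
      9 * Module.finrank k
        (LinearMap.ker
          (PiTensorProduct.map (fun i => (ρ (g i) : W →ₗ[k] W)) - LinearMap.id)) := by
  obtain ⟨e, hC, hA, hB⟩ := A4Rep.exists_monomial_basis (Ring.two_ne_zero hchar) hirr hdim
  choose d s hs hg using fun i => A4Rep.exists_signed_shift ρ e hC hA hB (g i)
  let B := Basis.piTensorProduct fun _ : Fin m => e
  have key := A4Rep.three_pow_card_le_nine_mul_finrank_ker B _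
    (Ring.neg_one_ne_one_of_char_ne_two hchar) d s hs
    (A4Rep.piTensorProduct_map_basis_apply e _ d s hg)
  rw [Fintype.card_fin] at key
  rwa [finrank_eq_card_basis B, Fintype.card_fun, Fintype.card_fin, Fintype.card_fin]

/-- Let `W` be the irreducible `3`-dimensional representation of `L = A₄` over
a field `k` of characteristic `≠ 2`, and let `G(m) = L^m` act on
`V(m) = W^{⊗m}`. Then every `g ∈ G(m)` has fixed space of dimension at least
`(1/9) dim V(m)`. -/
theorem stmt_14 (k : Type) [Field k] (hchar : ringChar k ≠ 2)
    (W : Type) [AddCommGroup W] [Module k W] [FiniteDimensional k W]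
    (ρ : Representation k (alternatingGroup (Fin 4)) W)
    (hirr : ∀ U : Submodule k W,
      (∀ g : alternatingGroup (Fin 4), ∀ w ∈ U, ρ g w ∈ U) → U = ⊥ ∨ U = ⊤)
    (hdim : Module.finrank k W = 3)
    (m : ℕ) (hm : 1 ≤ m) (g : Fin m → alternatingGroup (Fin 4)) :
    Module.finrank k (⨂[k] (_ : Fin m), W) ≤
      9 * Module.finrank k
        (LinearMap.ker
          (PiTensorProduct.map (fun i => (ρ (g i) : W →ₗ[k] W)) - LinearMap.id)) :=
  stmt_14_general k hchar W ρ hirr hdim m g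
end

section
/- Let q be a prime power and e > 2, with Φ*_e(q) the largest divisor of q^e − 1 coprime to q^m − 1 for all 1 ≤ m < e. If Φ*_e(q) = 1 then q = 2 and e = 6. -/
/-!
Write `Φₑ` for the `e`-th cyclotomic polynomial. A prime `r ∣ Φₑ(q)` makes `q` a root of `Φₑ`
modulo `r`, so the order of `q` mod `r` is the `r`-free part of `e`. Hence either `r` is a
primitive prime divisor of `qᵉ - 1`, or `r ∣ e` and the `r`-free part of `e` divides `r - 1`.
Without primitive prime divisors the second alternative holds for every prime factor of `Φₑ(q)`,
which forces all of them to be one prime `p` (the largest prime factor of `e`); since `p` divides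
`Φₑ(q)` only once, `Φₑ(q) = p`. This contradicts the size of `Φₑ(q)` when `p² ∣ e`. Otherwise
`e = s p` with `s ∣ p - 1`, and `Φₛ(q ^ p) = Φₛₚ(q) Φₛ(q) = p Φₛ(q)` together with
`(x - 1) ^ φ(s) ≤ Φₛ(x) ≤ (x + 1) ^ φ(s)` gives `q ^ p - 1 ≤ p (q + 1)`, so `q = 2`, `p = 3`,
`s = 2`.
-/

open Polynomial Finset

theorem Nat.lt_of_dvd_of_ordCompl_dvd_sub_one {e p r : ℕ} (hp : p.Prime) (hr : r.Prime)
    (hre : r ∣ e) (hrp : r ≠ p) (hpe : ordCompl[p] e ∣ p - 1) : r < p := by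
  have hpr : ¬p ∣ r := fun h => hrp ((Nat.prime_dvd_prime_iff_eq hp hr).mp h).symm
  have := Nat.le_of_dvd (Nat.sub_pos_of_lt hp.one_lt)
    ((Nat.dvd_ordCompl_of_dvd_not_dvd hre hpr).trans hpe)
  omega

theorem Nat.eq_of_ordCompl_dvd_sub_one {e p r : ℕ} (hp : p.Prime) (hr : r.Prime) (hpe : p ∣ e)
    (hre : r ∣ e) (hp1 : ordCompl[p] e ∣ p - 1) (hr1 : ordCompl[r] e ∣ r - 1) : r = p := by
  by_contra hrp
  exact (Nat.lt_of_dvd_of_ordCompl_dvd_sub_one hp hr hre hrp hp1).not_gt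
    (Nat.lt_of_dvd_of_ordCompl_dvd_sub_one hr hp hpe (Ne.symm hrp) hr1)

theorem Nat.ordCompl_dvd_div_of_dvd {p e : ℕ} (hp : p.Prime) (he : e ≠ 0) (hpe : p ∣ e) :
    ordCompl[p] e ∣ e / p := by
  apply Nat.dvd_div_of_mul_dvd
  conv_rhs => rw [← Nat.ordProj_mul_ordCompl_eq_self e p]
  exact mul_dvd_mul_right (dvd_pow_self p (hp.factorization_pos_of_dvd he hpe).ne') _

theorem Nat.four_dvd_of_ordCompl_two_dvd_one {e : ℕ} (he : 2 < e) (h : ordCompl[2] e ∣ 1) :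
    4 ∣ e := by
  rw [← Nat.ordProj_mul_ordCompl_eq_self e 2, Nat.dvd_one.mp h, mul_one] at he ⊢
  have : 2 ^ 1 < 2 ^ e.factorization 2 := by simpa using he
  exact pow_dvd_pow 2 ((Nat.pow_lt_pow_iff_right (by norm_num)).mp this)

theorem Nat.eq_three_and_eq_two_of_pow_le {p q : ℕ} (hp : 3 ≤ p) (hq : 2 ≤ q)
    (h : q ^ p ≤ p * (q + 1) + 1) : p = 3 ∧ q = 2 := by
  have hpow : q ^ 2 * (p - 1) ≤ q ^ p := by
    rw [show q ^ p = q ^ 2 * q ^ (p - 2) by rw [← pow_add]; congr 1; omega]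
    have : p - 2 < 2 ^ (p - 2) := Nat.lt_two_pow_self
    have : 2 ^ (p - 2) ≤ q ^ (p - 2) := Nat.pow_le_pow_left hq _
    gcongr; omega
  have hq2 : q = 2 := by
    obtain ⟨p, rfl⟩ : ∃ k, p = k + 3 := ⟨p - 3, by omega⟩
    rw [show p + 3 - 1 = p + 2 by omega] at hpow
    by_contra hq3
    have h3q : 3 * q ≤ q ^ 2 := by rw [sq]; exact Nat.mul_le_mul_right q (by omega)
    nlinarith [Nat.mul_le_mul_right (p + 2) h3q]
  subst hq2
  have hp5 : p ≤ 5 := by omega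
  interval_cases p <;> simp_all

theorem Int.not_sq_dvd_geom_sum_of_odd {p : ℕ} (hp : p.Prime) (hodd : Odd p) {y : ℤ}
    (hy : (p : ℤ) ∣ y - 1) : ¬(p : ℤ) ^ 2 ∣ ∑ i ∈ Finset.range p, y ^ i := by
  have hpZ : Prime (p : ℤ) := Nat.prime_iff_prime_int.mp hp
  have hpy : ¬(p : ℤ) ∣ y := fun h => hpZ.not_dvd_one (by simpa using dvd_sub h hy)
  have := emultiplicity_geom_sum₂_eq_one hpZ hodd hy hpy
  simp only [one_pow, mul_one] at this
  rw [← emultiplicity_lt_iff_not_dvd, this]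
  norm_num

theorem Int.not_four_dvd_one_add_sq {z : ℤ} (hz : Odd z) : ¬4 ∣ 1 + z ^ 2 := by
  have := Int.sq_mod_four_eq_one_of_odd hz
  omega

theorem cyclotomic_dvd_geom_sum_X_pow {R : Type*} [CommRing R] {d e : ℕ}
    (hd : d ∈ e.properDivisors) : cyclotomic e R ∣ ∑ i ∈ range (e / d), ((X : R[X]) ^ d) ^ i := by
  obtain ⟨f, hf⟩ := X_pow_sub_one_mul_cyclotomic_dvd_X_pow_sub_one_of_dvd R hd
  have hgeom : (∑ i ∈ range (e / d), ((X : R[X]) ^ d) ^ i) * (X ^ d - 1) = X ^ e - 1 := by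
    rw [geom_sum_mul, ← pow_mul, Nat.mul_div_cancel' (Nat.mem_properDivisors.mp hd).1]
  have hd0 : d ≠ 0 := (Nat.pos_of_mem_properDivisors hd).ne'
  refine ⟨f, sub_eq_zero.mp ((monic_X_pow_sub_C (1 : R) hd0).mul_left_eq_zero_iff.mp ?_)⟩
  rw [C_1, sub_mul, hgeom, hf]
  ring

theorem natAbs_cyclotomic_eval_dvd_pow_sub_one {q : ℕ} (hq : q ≠ 0) (e : ℕ) :
    ((cyclotomic e ℤ).eval (q : ℤ)).natAbs ∣ q ^ e - 1 := by
  rw [← Int.natCast_dvd_natCast, Int.natCast_natAbs, abs_dvd,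
    Nat.cast_sub (Nat.one_le_pow _ _ (Nat.pos_of_ne_zero hq))]
  simpa using eval_dvd (x := (q : ℤ)) (cyclotomic.dvd_X_pow_sub_one e ℤ)

theorem orderOf_lt_of_dvd_pow_sub_one {q e r : ℕ} (hq : q ≠ 0)
    (h : ∀ d, d ∣ q ^ e - 1 → (∀ m, 1 ≤ m → m < e → d.Coprime (q ^ m - 1)) → d ≤ 1)
    (hr : r.Prime) (hre : r ∣ q ^ e - 1) : orderOf (q : ZMod r) < e := by
  obtain ⟨m, hm1, hme, hrm⟩ : ∃ m, 1 ≤ m ∧ m < e ∧ r ∣ q ^ m - 1 := by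
    by_contra! hcop
    exact hr.one_lt.not_ge (h r hre fun m hm1 hme => (hr.coprime_iff_not_dvd).mpr (hcop m hm1 hme))
  have hpow : (q : ZMod r) ^ m = 1 := by
    have := (ZMod.natCast_eq_zero_iff _ r).mpr hrm
    rwa [Nat.cast_sub (Nat.one_le_pow _ _ (Nat.pos_of_ne_zero hq)), sub_eq_zero, Nat.cast_pow,
      Nat.cast_one] at this
  exact (orderOf_le_of_pow_eq_one hm1 hpow).trans_lt hme

theorem orderOf_eq_ordCompl_of_dvd_cyclotomic_eval {r e : ℕ} [hr : Fact r.Prime] {q : ℤ}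
    (he : e ≠ 0) (h : (r : ℤ) ∣ (cyclotomic e ℤ).eval q) :
    orderOf (q : ZMod r) = ordCompl[r] e := by
  have : NeZero ((ordCompl[r] e : ℕ) : ZMod r) :=
    ⟨by rw [Ne, ZMod.natCast_eq_zero_iff]; exact Nat.not_dvd_ordCompl hr.out he⟩
  have hroot :
      (cyclotomic (r ^ e.factorization r * ordCompl[r] e) (ZMod r)).IsRoot (q : ZMod r) := by
    rw [Nat.ordProj_mul_ordCompl_eq_self, IsRoot.def, ← eq_intCast (Int.castRingHom _),
      cyclotomic.eval_apply, eq_intCast, ZMod.intCast_zmod_eq_zero_iff_dvd]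
    exact h
  exact (isRoot_cyclotomic_prime_pow_mul_iff_of_charP.mp hroot).eq_orderOf.symm

theorem ordCompl_dvd_sub_one_of_dvd_cyclotomic_eval {r e : ℕ} [Fact r.Prime] {q : ℤ}
    (he : e ≠ 0) (h : (r : ℤ) ∣ (cyclotomic e ℤ).eval q) : ordCompl[r] e ∣ r - 1 := by
  have hord := orderOf_eq_ordCompl_of_dvd_cyclotomic_eval he h
  have hq : (q : ZMod r) ≠ 0 := by
    rintro hq
    rw [hq, orderOf_eq_zero_iff.mpr fun h0 => not_isUnit_zero h0.isUnit] at hord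
    exact (Nat.ordCompl_pos r he).ne hord
  exact hord ▸ ZMod.orderOf_dvd_card_sub_one hq

-- `Φₑ(q)` divides `1 + y + ⋯ + y ^ (p - 1)` with `y = q ^ (e / p) ≡ 1 [ZMOD p]`, which `p` divides
-- exactly once; for `p = 2` the sum is `1 + y`, and `4 ∣ e` makes `y` an odd square.
theorem not_sq_dvd_cyclotomic_eval {p e : ℕ} [hp : Fact p.Prime] {q : ℤ} (he : e ≠ 0)
    (hpe : p ∣ e) (h2 : p = 2 → 4 ∣ e) (h : (p : ℤ) ∣ (cyclotomic e ℤ).eval q) :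
    ¬(p : ℤ) ^ 2 ∣ (cyclotomic e ℤ).eval q := by
  have hy : (p : ℤ) ∣ q ^ (e / p) - 1 := by
    rw [← ZMod.intCast_zmod_eq_zero_iff_dvd, Int.cast_sub, Int.cast_pow, Int.cast_one, sub_eq_zero,
      ← orderOf_dvd_iff_pow_eq_one, orderOf_eq_ordCompl_of_dvd_cyclotomic_eval he h]
    exact Nat.ordCompl_dvd_div_of_dvd hp.out he hpe
  have hdvd : (cyclotomic e ℤ).eval q ∣ ∑ i ∈ range p, (q ^ (e / p)) ^ i := by
    have hdiv : e / p ∈ e.properDivisors :=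
      Nat.mem_properDivisors.mpr ⟨Nat.div_dvd_of_dvd hpe, Nat.div_lt_self (by omega) hp.out.one_lt⟩
    simpa [eval_finsetSum, Nat.div_div_self hpe he] using
      eval_dvd (x := q) (cyclotomic_dvd_geom_sum_X_pow (R := ℤ) hdiv)
  intro hsq
  rcases hp.out.eq_two_or_odd' with rfl | hodd
  · obtain ⟨k, rfl⟩ := h2 rfl
    have hsq' : q ^ (4 * k / 2) = (q ^ k) ^ 2 := by
      rw [← pow_mul]; congr 1; omega
    rw [hsq'] at hy hdvd
    refine Int.not_four_dvd_one_add_sq ?_ (by simpa [sum_range_succ, add_comm] using hsq.trans hdvd)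
    exact (Int.odd_pow' two_ne_zero).mp (Int.odd_iff.mpr (by omega))
  · exact Int.not_sq_dvd_geom_sum_of_odd hp.out hodd hy (hsq.trans hdvd)

theorem prime_lt_natAbs_cyclotomic_eval_of_sq_dvd {p e q : ℕ} (hp : p.Prime) (he : e ≠ 0)
    (hpe : p ^ 2 ∣ e) (hq : 2 ≤ q) : p < ((cyclotomic e ℤ).eval (q : ℤ)).natAbs := by
  obtain ⟨n, rfl⟩ := hpe
  have hn : n ≠ 0 := by rintro rfl; simp at he
  have hexp : (cyclotomic (p ^ 2 * n) ℤ).eval (q : ℤ) =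
      (cyclotomic (p * n) ℤ).eval ((q ^ p : ℕ) : ℤ) := by
    rw [show p ^ 2 * n = p * n * p by ring,
      ← cyclotomic_expand_eq_cyclotomic hp (dvd_mul_right p n), expand_eval]
    push_cast
    rfl
  have hlt := sub_one_lt_natAbs_cyclotomic_eval (n := p * n) (q := q ^ p)
    (one_lt_mul_of_lt_of_le hp.one_lt (Nat.one_le_iff_ne_zero.mpr hn))
    (Nat.one_lt_pow hp.ne_zero (by omega)).ne'
  have hp2 : p < 2 ^ p := Nat.lt_two_pow_self
  have h2q : 2 ^ p ≤ q ^ p := Nat.pow_le_pow_left hq p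
  rw [hexp]
  omega

theorem pow_sub_one_le_mul_add_one_of_cyclotomic_eval_eq {p s : ℕ} (hp : p.Prime) (hps : ¬p ∣ s)
    {x : ℝ} (hx : 1 < x) (h : (cyclotomic (s * p) ℝ).eval x = p) : x ^ p - 1 ≤ p * (x + 1) := by
  have hexpand : (cyclotomic s ℝ).eval (x ^ p) = p * (cyclotomic s ℝ).eval x := by
    simpa [h] using congrArg (eval x) (cyclotomic_expand_eq_cyclotomic_mul hp hps ℝ)
  have ht : s.totient ≠ 0 := by
    rw [Ne, Nat.totient_eq_zero]; rintro rfl; exact hps (dvd_zero p)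
  by_contra! hlt
  have hp1 : (1 : ℝ) ≤ p := by exact_mod_cast hp.one_lt.le
  have := calc
    (p * (x + 1)) ^ s.totient < (x ^ p - 1) ^ s.totient :=
      pow_lt_pow_left₀ hlt (by positivity) ht
    _ ≤ (cyclotomic s ℝ).eval (x ^ p) :=
      sub_one_pow_totient_le_cyclotomic_eval (one_lt_pow₀ hx hp.ne_zero) s
    _ = p * (cyclotomic s ℝ).eval x := hexpand
    _ ≤ p * (x + 1) ^ s.totient := by
      gcongr; exact cyclotomic_eval_le_add_one_pow_totient hx s
    _ ≤ p ^ s.totient * (x + 1) ^ s.totient := by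
      gcongr; exact le_self_pow₀ hp1 ht
  rw [mul_pow] at this
  exact this.false

theorem exists_prime_natAbs_cyclotomic_eval_eq {q e : ℕ} (hq : 2 ≤ q) (he : 2 < e)
    (h : ∀ r, r.Prime → r ∣ ((cyclotomic e ℤ).eval (q : ℤ)).natAbs → orderOf (q : ZMod r) < e) :
    ∃ p, p.Prime ∧ p ∣ e ∧ ordCompl[p] e ∣ p - 1 ∧ ((cyclotomic e ℤ).eval (q : ℤ)).natAbs = p := by
  set N := ((cyclotomic e ℤ).eval (q : ℤ)).natAbs
  have he0 : e ≠ 0 := by omega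
  have hN1 : 1 < N := by
    have := sub_one_lt_natAbs_cyclotomic_eval (n := e) (q := q) (by omega) (by omega)
    omega
  have hdiv : ∀ r, r.Prime → r ∣ N → r ∣ e ∧ ordCompl[r] e ∣ r - 1 := by
    intro r hr hrN
    have := Fact.mk hr
    have hrZ : (r : ℤ) ∣ (cyclotomic e ℤ).eval (q : ℤ) := Int.natCast_dvd.mpr hrN
    refine ⟨?_, ordCompl_dvd_sub_one_of_dvd_cyclotomic_eval he0 hrZ⟩
    by_contra hre
    have hord := h r hr hrN
    rw [← Int.cast_natCast, orderOf_eq_ordCompl_of_dvd_cyclotomic_eval he0 hrZ,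
      Nat.factorization_eq_zero_of_not_dvd hre, pow_zero, Nat.div_one] at hord
    exact hord.false
  obtain ⟨p, hp, hpN⟩ := Nat.exists_prime_and_dvd hN1.ne'
  obtain ⟨hpe, hp1⟩ := hdiv p hp hpN
  have hNp : N = p ^ N.primeFactorsList.length :=
    Nat.eq_prime_pow_of_unique_prime_dvd (by omega) fun hr hrN =>
      Nat.eq_of_ordCompl_dvd_sub_one hp hr hpe (hdiv _ hr hrN).1 hp1 (hdiv _ hr hrN).2
  have hsq : ¬p ^ 2 ∣ N := by
    have := Fact.mk hp
    have := not_sq_dvd_cyclotomic_eval he0 hpe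
      (by rintro rfl; exact Nat.four_dvd_of_ordCompl_two_dvd_one he hp1) (Int.natCast_dvd.mpr hpN)
    rwa [← Nat.cast_pow, Int.natCast_dvd] at this
  refine ⟨p, hp, hpe, hp1, ?_⟩
  rcases Nat.lt_trichotomy N.primeFactorsList.length 1 with hK | hK | hK
  · rw [hNp, Nat.lt_one_iff.mp hK, pow_zero] at hN1
    exact absurd hN1 (lt_irrefl 1)
  · rw [hNp, hK, pow_one]
  · exact absurd (hNp ▸ pow_dvd_pow p hK) hsq

theorem eq_two_and_eq_six_of_natAbs_cyclotomic_eval_eq {p q e : ℕ} (hp : p.Prime) (hq : 2 ≤ q)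
    (he : 2 < e) (hpe : p ∣ e) (hp1 : ordCompl[p] e ∣ p - 1)
    (h : ((cyclotomic e ℤ).eval (q : ℤ)).natAbs = p) : q = 2 ∧ e = 6 := by
  have he0 : e ≠ 0 := by omega
  have hsq : ¬p ^ 2 ∣ e := fun hsq =>
    (prime_lt_natAbs_cyclotomic_eval_of_sq_dvd hp he0 hsq hq).ne' h
  have hp3 : 3 ≤ p := by
    rcases hp.eq_two_or_odd' with rfl | ⟨k, rfl⟩
    · exact absurd (Nat.four_dvd_of_ordCompl_two_dvd_one he hp1) hsq
    · have := hp.two_le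
      omega
  set s := ordCompl[p] e
  have hes : e = s * p := by
    have hk : e.factorization p = 1 := by
      have := hp.factorization_pos_of_dvd he0 hpe
      have := mt (hp.pow_dvd_iff_le_factorization he0).mpr hsq
      omega
    rw [mul_comm, ← pow_one p, ← hk, Nat.ordProj_mul_ordCompl_eq_self]
  have hreal : (cyclotomic (s * p) ℝ).eval (q : ℝ) = p := by
    have hpos := cyclotomic_pos' e (by exact_mod_cast hq : (1 : ℤ) < q)
    rw [← hes, ← Int.cast_natCast q, ← eq_intCast (Int.castRingHom ℝ), cyclotomic.eval_apply,
      eq_intCast, ← Int.natAbs_of_nonneg hpos.le, h, Int.cast_natCast]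
  have hle := pow_sub_one_le_mul_add_one_of_cyclotomic_eval_eq hp (Nat.not_dvd_ordCompl hp he0)
    (by exact_mod_cast hq) hreal
  obtain ⟨rfl, rfl⟩ := Nat.eq_three_and_eq_two_of_pow_le hp3 hq (by
    have : ((q ^ p : ℕ) : ℝ) ≤ ((p * (q + 1) + 1 : ℕ) : ℝ) := by push_cast; linarith
    exact_mod_cast this)
  rcases (Nat.dvd_prime Nat.prime_two).mp (hp1 : s ∣ 2) with hs | hs
  · rw [hes, hs, one_mul, cyclotomic_three] at h
    norm_num at h
  · exact ⟨rfl, by rw [hes, hs]⟩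

/-- Let `q` be a prime power, `e > 2`, and `Φ` the largest divisor of
`q^e - 1` coprime to `q^m - 1` for all `1 ≤ m < e`. If `Φ = 1` then `q = 2`
and `e = 6` (Zsigmondy). -/
theorem stmt_17 (q e Φ : ℕ)
    (hq : ∃ p n : ℕ, p.Prime ∧ 0 < n ∧ q = p ^ n) (he : 2 < e)
    (hΦ : IsGreatest
      {d : ℕ | d ∣ q ^ e - 1 ∧ ∀ m, 1 ≤ m → m < e → Nat.Coprime d (q ^ m - 1)} Φ)
    (h1 : Φ = 1) :
    q = 2 ∧ e = 6 := by
  obtain ⟨P, n, hP, hn, hqP⟩ := hq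
  have hq2 : 2 ≤ q := hqP ▸ hP.two_le.trans (Nat.le_self_pow hn.ne' P)
  have hnoprim : ∀ r, r.Prime → r ∣ q ^ e - 1 → orderOf (q : ZMod r) < e :=
    fun r hr hre =>
      orderOf_lt_of_dvd_pow_sub_one (by omega) (fun d hd hcop => h1 ▸ hΦ.2 ⟨hd, hcop⟩) hr hre
  obtain ⟨p, hp, hpe, hp1, hZ⟩ := exists_prime_natAbs_cyclotomic_eval_eq hq2 he fun r hr hrZ =>
    hnoprim r hr (hrZ.trans (natAbs_cyclotomic_eval_dvd_pow_sub_one (by omega) e))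
  exact eq_two_and_eq_six_of_natAbs_cyclotomic_eval_eq hp hq2 he hpe hp1 hZ
end

section
/- Let G = A₅ (≅ PSL₂(5) ≅ PSL₂(4)). There exist three conjugate elements x, y, z of order 5 in G with xyz = 1 and ⟨x, y⟩ = G. -/
/-!
Take `x = (0 1 2 3 4)` and its conjugate `y = g x g⁻¹` by `g = (0 1 2)`, and put `z = (x y)⁻¹`,
which turns out to be conjugate to `x` as well. The subgroup `⟨x, y⟩` contains elements of orders
`5`, `3` (namely `x y⁻¹`) and `2` (namely `x² y⁻¹`), so its order is divisible by `30` and its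
index in `A₅` divides `2`. An index-two subgroup is normal, and `A₅` is simple, so `⟨x, y⟩ = A₅`.
-/

set_option maxRecDepth 4000

open Equiv Subgroup

theorem Subgroup.eq_top_of_card_dvd_two_mul_card {G : Type*} [Group G] [Finite G]
    [IsSimpleGroup G] {H : Subgroup G} (hH : H ≠ ⊥) (hdvd : Nat.card G ∣ 2 * Nat.card H) :
    H = ⊤ := by
  have hindex : H.index ∣ 2 := by
    rw [← H.index_mul_card] at hdvd
    exact Nat.dvd_of_mul_dvd_mul_right Nat.card_pos hdvd
  rcases (Nat.dvd_prime Nat.prime_two).1 hindex with hone | htwo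
  · exact index_eq_one.1 hone
  · exact (IsSimpleGroup.eq_bot_or_eq_top_of_normal H (normal_of_index_eq_two htwo)).resolve_left hH

theorem Subgroup.eq_top_of_orderOf_two_three_five_mem {G : Type*} [Group G] [Finite G]
    [IsSimpleGroup G] (hG : Nat.card G ∣ 60) {H : Subgroup G} {a b c : G}
    (ha : a ∈ H) (hb : b ∈ H) (hc : c ∈ H)
    (ha2 : orderOf a = 2) (hb3 : orderOf b = 3) (hc5 : orderOf c = 5) : H = ⊤ := by
  have h2 := ha2 ▸ H.orderOf_dvd_natCard ha
  have h3 := hb3 ▸ H.orderOf_dvd_natCard hb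
  have h5 := hc5 ▸ H.orderOf_dvd_natCard hc
  have h30 : 30 ∣ Nat.card H :=
    Nat.Coprime.mul_dvd_of_dvd_of_dvd (by norm_num)
      (Nat.Coprime.mul_dvd_of_dvd_of_dvd (by norm_num) h2 h3) h5
  have hne : H ≠ ⊥ := fun hbot ↦ by
    rw [hbot, mem_bot] at hc
    simp [hc] at hc5
  exact H.eq_top_of_card_dvd_two_mul_card hne (hG.trans (mul_dvd_mul_left 2 h30))

def fiveCycle : alternatingGroup (Fin 5) :=
  ⟨c[0, 1, 2, 3, 4], Perm.mem_alternatingGroup.2 (by decide)⟩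

def threeCycle : alternatingGroup (Fin 5) :=
  ⟨c[0, 1, 2], Perm.mem_alternatingGroup.2 (by decide)⟩

/-- In `A₅` there exist three conjugate elements of order `5` with product `1`
generating the group. -/
theorem stmt_18 :
    ∃ x y z : alternatingGroup (Fin 5),
      orderOf x = 5 ∧ IsConj x y ∧ IsConj x z ∧ x * y * z = 1 ∧
      Subgroup.closure {x, y} = (⊤ : Subgroup (alternatingGroup (Fin 5))) := by
  have : Fact (Nat.Prime 5) := ⟨by norm_num⟩
  set x := fiveCycle
  set y := threeCycle * x * threeCycle⁻¹
  have hx5 : orderOf x = 5 := orderOf_eq_prime (by decide) (by decide)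
  refine ⟨x, y, (x * y)⁻¹, hx5, isConj_iff.2 ⟨threeCycle, rfl⟩,
    isConj_iff.2 ⟨⟨c[1, 3, 2], Perm.mem_alternatingGroup.2 (by decide)⟩, by decide⟩,
    mul_inv_cancel _, ?_⟩
  have hx : x ∈ closure {x, y} := subset_closure (by simp)
  have hy : y ∈ closure {x, y} := subset_closure (by simp)
  have hcard : Nat.card (alternatingGroup (Fin 5)) = 60 := by
    rw [nat_card_alternatingGroup, Nat.card_fin]; rfl
  exact eq_top_of_orderOf_two_three_five_mem hcard.dvd
    (mul_mem (mul_mem hx hx) (inv_mem hy)) (mul_mem hx (inv_mem hy)) hx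
    (orderOf_eq_prime (by decide) (by decide)) (orderOf_eq_prime (by decide) (by decide)) hx5
end
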